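/- arXiv:1304.7530 — 5 statements merged into one kernel-verified Lean document; each statement's English description precedes it below -/
import Mathlib

section
/- Let B > 0 and ε ∈ (0,1], let r be a vertex of G, and assume G is B-proper for r. Let T be a tree in G containing r with c(T) ≥ εB/2, and let γ = π(T)/c(T) be its prize-to-cost ratio. Then there exists a tree T* in G containing r whose prize-to-cost ratio is at least (ε/4)·γ and whose cost satisfies (ε/2)·B ≤ c(T*) ≤ (1+ε)·B. -/
open scoped Classical

namespace PCSTAux

variable {V : Type*}

/-- Sum of `c` over a finset. -/
noncomputable def cF (c : V → ℝ) (S : Finset V) : ℝ := ∑ x ∈ S, c x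

lemma cF_nonneg {c : V → ℝ} (hc : ∀ v, 0 ≤ c v) (S : Finset V) : 0 ≤ cF c S :=
  Finset.sum_nonneg fun i _ => hc i

lemma cF_mono {c : V → ℝ} (hc : ∀ v, 0 ≤ c v) {S S' : Finset V} (h : S ⊆ S') :
    cF c S ≤ cF c S' :=
  Finset.sum_le_sum_of_subset_of_nonneg h fun i _ _ => hc i

lemma cF_union_le {c : V → ℝ} (hc : ∀ v, 0 ≤ c v) (S S' : Finset V) :
    cF c (S ∪ S') ≤ cF c S + cF c S' := by
  classical
  have h1 : S ∪ S' = S ∪ (S' \ S) := by simp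
  rw [h1]
  unfold cF
  rw [Finset.sum_union Finset.disjoint_sdiff]
  have h2 : ∑ x ∈ S' \ S, c x ≤ ∑ x ∈ S', c x :=
    Finset.sum_le_sum_of_subset_of_nonneg (Finset.sdiff_subset) fun i _ _ => hc i
  linarith

lemma cF_sdiff {c : V → ℝ} {S R : Finset V} (h : S ⊆ R) :
    cF c (R \ S) = cF c R - cF c S := by
  classical
  have := Finset.sum_sdiff (f := c) h
  unfold cF
  linarith

lemma cF_erase_le {c : V → ℝ} (hc : ∀ v, 0 ≤ c v) (S : Finset V) (u : V) :
    cF c (S.erase u) ≤ cF c S :=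
  cF_mono hc (Finset.erase_subset _ _)

lemma cF_insert {c : V → ℝ} {S : Finset V} {v : V} (hv : v ∉ S) :
    cF c (insert v S) = c v + cF c S := by
  classical exact Finset.sum_insert hv

/-- A parent structure on a finite vertex set `R`, rooted at `r`, compatible with `G`. -/
def GoodPar (G : SimpleGraph V) (R : Finset V) (r : V) (par : V → V) : Prop :=
  r ∈ R ∧ par r = r ∧ (∀ x ∈ R, x ≠ r → par x ∈ R ∧ G.Adj x (par x)) ∧
    ∀ x ∈ R, ∃ n : ℕ, par^[n] x = r

namespace GoodPar

variable {G : SimpleGraph V} {R : Finset V} {r : V} {par : V → V}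

lemma root_mem (gp : GoodPar G R r par) : r ∈ R := gp.1
lemma par_root (gp : GoodPar G R r par) : par r = r := gp.2.1
lemma par_mem (gp : GoodPar G R r par) {x : V} (hx : x ∈ R) (hxr : x ≠ r) : par x ∈ R :=
  (gp.2.2.1 x hx hxr).1
lemma adj (gp : GoodPar G R r par) {x : V} (hx : x ∈ R) (hxr : x ≠ r) : G.Adj x (par x) :=
  (gp.2.2.1 x hx hxr).2
lemma reach (gp : GoodPar G R r par) {x : V} (hx : x ∈ R) : ∃ n : ℕ, par^[n] x = r :=
  gp.2.2.2 x hx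

lemma iterate_mem (gp : GoodPar G R r par) {x : V} (hx : x ∈ R) (n : ℕ) : par^[n] x ∈ R := by
  induction n with
  | zero => simpa
  | succ n ih =>
    rw [Function.iterate_succ_apply']
    by_cases h : par^[n] x = r
    · rw [h, gp.par_root]; exact gp.root_mem
    · exact gp.par_mem ih h

/-- No nontrivial cycles: if `x` returns to itself, then `x = r`. -/
lemma eq_root_of_period (gp : GoodPar G R r par) {x : V} (hx : x ∈ R) {p : ℕ}
    (hp : par^[p] x = x) (hpos : 0 < p) : x = r := by
  obtain ⟨m, hm⟩ := gp.reach hx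
  have hper : ∀ k : ℕ, par^[p * k] x = x := by
    intro k
    induction k with
    | zero => simp
    | succ k ih =>
      have : p * (k + 1) = p * k + p := by ring
      rw [this, Function.iterate_add_apply, hp, ih]
  have h1 : par^[p * m] x = x := hper m
  have hle : m ≤ p * m := Nat.le_mul_of_pos_left m hpos
  have h2 : par^[p * m] x = r := by
    have : p * m = (p * m - m) + m := by omega
    rw [this, Function.iterate_add_apply, hm, Function.iterate_fixed gp.par_root]
  rw [h1] at h2; exact h2

end GoodPar

/-- Chains under `Function.update par v v` still reach `v`. -/
lemma reach_update {par : V → V} {v x : V} (h : ∃ n, par^[n] x = v) :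
    ∃ n, (Function.update par v v)^[n] x = v := by
  obtain ⟨n, hn⟩ := h
  induction n generalizing x with
  | zero => exact ⟨0, hn⟩
  | succ n ih =>
    by_cases hxv : x = v
    · exact ⟨0, hxv⟩
    · rw [Function.iterate_succ_apply] at hn
      obtain ⟨m, hm⟩ := ih hn
      refine ⟨m + 1, ?_⟩
      rw [Function.iterate_succ_apply, Function.update_of_ne hxv]
      exact hm


variable {G : SimpleGraph V} {R : Finset V} {r : V} {par : V → V}

/-- Removing a "parent-closed-upward" set keeps a good parent structure. -/
lemma GoodPar.sdiff (gp : GoodPar G R r par) {W : Finset V} (hrW : r ∉ W)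
    (hcl : ∀ x ∈ R, par x ∈ W → x ∈ W) : GoodPar G (R \ W) r par := by
  refine ⟨Finset.mem_sdiff.2 ⟨gp.root_mem, hrW⟩, gp.par_root, ?_, ?_⟩
  · intro x hx hxr
    rw [Finset.mem_sdiff] at hx
    refine ⟨Finset.mem_sdiff.2 ⟨gp.par_mem hx.1 hxr, ?_⟩, gp.adj hx.1 hxr⟩
    intro hpx
    exact hx.2 (hcl x hx.1 hpx)
  · intro x hx
    exact gp.reach (Finset.mem_sdiff.1 hx).1

/-- Glueing two rooted structures along a common vertex. -/
lemma GoodPar.glue {S₁ S₂ : Finset V} {u₁ u₂ : V} {par₁ par₂ : V → V}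
    (gp₁ : GoodPar G S₁ u₁ par₁) (gp₂ : GoodPar G S₂ u₂ par₂) (h12 : u₁ ∈ S₂) :
    GoodPar G (S₁ ∪ S₂) u₂ (fun z => if z ∈ S₂ then par₂ z else par₁ z) := by
  set p : V → V := fun z => if z ∈ S₂ then par₂ z else par₁ z with hp
  have hmem2 : ∀ z ∈ S₂, p z = par₂ z := fun z hz => by simp [hp, hz]
  have claim₂ : ∀ (k : ℕ) (x : V), x ∈ S₂ → par₂^[k] x = u₂ → ∃ m, p^[m] x = u₂ := by
    intro k
    induction k with
    | zero => intro x hx hx2; exact ⟨0, hx2⟩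
    | succ k ih =>
      intro x hx hx2
      by_cases hxu : x = u₂
      · exact ⟨0, hxu⟩
      · rw [Function.iterate_succ_apply] at hx2
        obtain ⟨m, hm⟩ := ih (par₂ x) (gp₂.par_mem hx hxu) hx2
        exact ⟨m + 1, by rw [Function.iterate_succ_apply, hmem2 x hx]; exact hm⟩
  have claim₁ : ∀ (k : ℕ) (x : V), x ∈ S₁ → par₁^[k] x = u₁ → ∃ m, p^[m] x = u₂ := by
    intro k
    induction k with
    | zero =>
      intro x hx hx1
      subst hx1
      obtain ⟨k₂, hk₂⟩ := gp₂.reach h12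
      exact claim₂ k₂ x h12 hk₂
    | succ k ih =>
      intro x hx hx1
      by_cases hx2 : x ∈ S₂
      · obtain ⟨k₂, hk₂⟩ := gp₂.reach hx2
        exact claim₂ k₂ x hx2 hk₂
      · have hxu : x ≠ u₁ := fun h => hx2 (h ▸ h12)
        rw [Function.iterate_succ_apply] at hx1
        obtain ⟨m, hm⟩ := ih (par₁ x) (gp₁.par_mem hx hxu) hx1
        exact ⟨m + 1, by rw [Function.iterate_succ_apply, hp]; simp only [hx2, if_false]; exact hm⟩
  refine ⟨Finset.mem_union.2 (Or.inr gp₂.root_mem), by simp [hp, gp₂.root_mem, gp₂.par_root], ?_, ?_⟩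
  · intro x hx hxu
    rcases Finset.mem_union.1 hx with hx1 | hx2
    · by_cases hx2 : x ∈ S₂
      · rw [hmem2 x hx2]
        exact ⟨Finset.mem_union.2 (Or.inr (gp₂.par_mem hx2 hxu)), gp₂.adj hx2 hxu⟩
      · have hxu1 : x ≠ u₁ := fun h => hx2 (h ▸ h12)
        have : p x = par₁ x := by simp [hp, hx2]
        rw [this]
        exact ⟨Finset.mem_union.2 (Or.inl (gp₁.par_mem hx1 hxu1)), gp₁.adj hx1 hxu1⟩
    · rw [hmem2 x hx2]
      exact ⟨Finset.mem_union.2 (Or.inr (gp₂.par_mem hx2 hxu)), gp₂.adj hx2 hxu⟩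
  · intro x hx
    rcases Finset.mem_union.1 hx with hx1 | hx2
    · obtain ⟨k, hk⟩ := gp₁.reach hx1
      exact claim₁ k x hx1 hk
    · obtain ⟨k, hk⟩ := gp₂.reach hx2
      exact claim₂ k x hx2 hk

/-- Auxiliary to re-rooting. -/
lemma reroot_aux : ∀ (n : ℕ) (r : V) (par : V → V), GoodPar G R r par →
    ∀ v ∈ R, par^[n] v = r → ∃ par', GoodPar G R v par' := by
  intro n
  induction n with
  | zero =>
    intro r par gp v hv hn
    simp only [Function.iterate_zero, id_eq] at hn
    subst hn; exact ⟨par, gp⟩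
  | succ n ih =>
    intro r par gp v hv hn
    by_cases hvr : v = r
    · subst hvr; exact ⟨par, gp⟩
    · set w := par v with hwdef
      have hwv : w ≠ v := by
        intro h
        have hfix : ∀ k : ℕ, par^[k] v = v := Function.iterate_fixed (by rw [← hwdef, h])
        exact hvr ((hfix (n+1)) ▸ hn)
      have hw : w ∈ R := gp.par_mem hv hvr
      have hadj : G.Adj v w := gp.adj hv hvr
      rw [Function.iterate_succ_apply, ← hwdef] at hn
      obtain ⟨par₁, gp₁⟩ := ih r par gp w hw hn
      set par₂ := Function.update (Function.update par₁ w v) v v with hpar₂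
      have hp2v : par₂ v = v := by simp [hpar₂]
      have hp2w : par₂ w = v := by
        rw [hpar₂, Function.update_of_ne hwv, Function.update_self]
      have hp2x : ∀ x, x ≠ v → x ≠ w → par₂ x = par₁ x := by
        intro x h1 h2
        rw [hpar₂, Function.update_of_ne h1, Function.update_of_ne h2]
      refine ⟨par₂, hv, hp2v, ?_, ?_⟩
      · intro x hx hxv
        by_cases hxw : x = w
        · subst hxw; rw [hp2w]; exact ⟨hv, hadj.symm⟩
        · rw [hp2x x hxv hxw]
          exact ⟨gp₁.par_mem hx hxw, gp₁.adj hx hxw⟩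
      · have claim : ∀ (k : ℕ) (x : V), x ∈ R → par₁^[k] x = w → ∃ m, par₂^[m] x = v := by
          intro k
          induction k with
          | zero =>
            intro x hx hk
            simp only [Function.iterate_zero, id_eq] at hk
            subst hk; exact ⟨1, by simpa using hp2w⟩
          | succ k ihk =>
            intro x hx hk
            by_cases hxv : x = v
            · exact ⟨0, hxv⟩
            by_cases hxw : x = w
            · subst hxw; exact ⟨1, by simpa using hp2w⟩
            · rw [Function.iterate_succ_apply] at hk
              obtain ⟨m, hm⟩ := ihk (par₁ x) (gp₁.par_mem hx hxw) hk
              refine ⟨m + 1, ?_⟩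
              rw [Function.iterate_succ_apply, hp2x x hxv hxw]
              exact hm
        intro x hx
        obtain ⟨k, hk⟩ := gp₁.reach hx
        exact claim k x hx hk

/-- A rooted structure can be re-rooted at any of its vertices. -/
lemma GoodPar.reroot (gp : GoodPar G R r par) {v : V} (hv : v ∈ R) :
    ∃ par', GoodPar G R v par' := by
  obtain ⟨n, hn⟩ := gp.reach hv
  exact reroot_aux n r par gp v hv hn


/-- The set of vertices whose parent-chain passes through `v`. -/
noncomputable def Sub (R : Finset V) (par : V → V) (v : V) : Finset V :=
  R.filter fun x => ∃ n : ℕ, par^[n] x = v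

lemma mem_Sub {v x : V} : x ∈ Sub R par v ↔ x ∈ R ∧ ∃ n : ℕ, par^[n] x = v :=
  Finset.mem_filter

lemma Sub_subset {v : V} : Sub R par v ⊆ R := Finset.filter_subset _ _

lemma mem_Sub_self {v : V} (hv : v ∈ R) : v ∈ Sub R par v :=
  mem_Sub.2 ⟨hv, 0, rfl⟩

lemma Sub_trans {u v x : V} (hx : x ∈ Sub R par u) (hu : u ∈ Sub R par v) :
    x ∈ Sub R par v := by
  obtain ⟨hxR, a, ha⟩ := mem_Sub.1 hx
  obtain ⟨-, b, hb⟩ := mem_Sub.1 hu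
  exact mem_Sub.2 ⟨hxR, b + a, by rw [Function.iterate_add_apply, ha, hb]⟩

lemma mem_Sub_of_par {v x : V} (hx : x ∈ R) (hp : par x ∈ Sub R par v) :
    x ∈ Sub R par v := by
  obtain ⟨-, n, hn⟩ := mem_Sub.1 hp
  exact mem_Sub.2 ⟨hx, n + 1, by rw [Function.iterate_succ_apply]; exact hn⟩

variable (gp : GoodPar G R r par)
include gp

lemma Sub_root_eq : Sub R par r = R := by
  apply Finset.Subset.antisymm Sub_subset
  intro x hx
  exact mem_Sub.2 ⟨hx, gp.reach hx⟩

lemma eq_root_of_root_mem_Sub {v : V} (h : r ∈ Sub R par v) : v = r := by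
  obtain ⟨-, n, hn⟩ := mem_Sub.1 h
  rw [Function.iterate_fixed gp.par_root] at hn
  exact hn.symm

lemma Sub_antisymm {u v : V} (h1 : u ∈ Sub R par v) (h2 : v ∈ Sub R par u) : u = v := by
  obtain ⟨huR, a, ha⟩ := mem_Sub.1 h1
  obtain ⟨hvR, b, hb⟩ := mem_Sub.1 h2
  rcases Nat.eq_zero_or_pos (b + a) with h | h
  · obtain ⟨hb0, ha0⟩ := Nat.add_eq_zero.mp h
    subst ha0; simpa using ha
  · have hper : par^[b + a] u = u := by rw [Function.iterate_add_apply, ha, hb]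
    have hur : u = r := gp.eq_root_of_period huR hper h
    subst hur
    exact (eq_root_of_root_mem_Sub gp h1).symm

lemma par_mem_Sub {v x : V} (hx : x ∈ Sub R par v) (hxv : x ≠ v) :
    par x ∈ Sub R par v := by
  obtain ⟨hxR, n, hn⟩ := mem_Sub.1 hx
  have hxr : x ≠ r := by
    intro h; subst h
    exact hxv (eq_root_of_root_mem_Sub gp hx).symm
  rcases n with - | n
  · exact absurd hn hxv
  · rw [Function.iterate_succ_apply] at hn
    exact mem_Sub.2 ⟨gp.par_mem hxR hxr, n, hn⟩

/-- Children of `v`: elements of `R` other than `v` whose parent is `v`. -/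
noncomputable def children (R : Finset V) (par : V → V) (v : V) : Finset V :=
  R.filter fun u => u ≠ v ∧ par u = v

omit gp in
lemma mem_children {v u : V} : u ∈ children R par v ↔ u ∈ R ∧ u ≠ v ∧ par u = v :=
  Finset.mem_filter

lemma child_mem_Sub {v u : V} (hu : u ∈ children R par v) : u ∈ Sub R par v := by
  obtain ⟨huR, -, hpu⟩ := mem_children.1 hu
  exact mem_Sub.2 ⟨huR, 1, by simpa using hpu⟩

lemma child_ne_root {v u : V} (hu : u ∈ children R par v) : u ≠ r := by
  obtain ⟨huR, hune, hpu⟩ := mem_children.1 hu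
  intro h; subst h
  exact hune (by rw [← hpu, gp.par_root])

lemma root_not_mem_child_Sub {v u : V} (hu : u ∈ children R par v) :
    r ∉ Sub R par u := by
  intro h
  exact child_ne_root gp hu (eq_root_of_root_mem_Sub gp h)

lemma v_not_mem_child_Sub {v u : V} (hu : u ∈ children R par v) :
    v ∉ Sub R par u := by
  intro h
  exact (mem_children.1 hu).2.1 (Sub_antisymm gp (child_mem_Sub gp hu) h)

lemma child_Sub_subset {v u : V} (hu : u ∈ children R par v) :
    Sub R par u ⊆ Sub R par v := fun x hx => Sub_trans hx (child_mem_Sub gp hu)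

lemma child_Sub_disjoint_aux {v u₁ u₂ x : V} (hu₁ : u₁ ∈ children R par v)
    (hu₂ : u₂ ∈ children R par v) {a b : ℕ} (hab : a ≤ b) (hxR : x ∈ R)
    (ha : par^[a] x = u₁) (hb : par^[b] x = u₂) : u₁ = u₂ := by
  have hb' : par^[b - a] u₁ = u₂ := by
    rw [← ha, ← Function.iterate_add_apply]
    rw [Nat.sub_add_cancel hab]
    exact hb
  rcases Nat.eq_zero_or_pos (b - a) with h | h
  · rw [h] at hb'; simpa using hb'
  · obtain ⟨k, hk⟩ := Nat.exists_eq_succ_of_ne_zero (Nat.pos_iff_ne_zero.mp h)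
    rw [hk, Function.iterate_succ_apply, (mem_children.1 hu₁).2.2] at hb'
    have hvR : v ∈ R := by
      have := (mem_children.1 hu₁).2.2
      have hu₁R := (mem_children.1 hu₁).1
      have hu₁r := child_ne_root gp hu₁
      rw [← this]; exact gp.par_mem hu₁R hu₁r
    have h1 : u₂ ∈ Sub R par v := child_mem_Sub gp hu₂
    have h2 : v ∈ Sub R par u₂ := mem_Sub.2 ⟨hvR, k, hb'⟩
    exact absurd (Sub_antisymm gp h1 h2) (mem_children.1 hu₂).2.1

lemma child_Sub_disjoint {v u₁ u₂ : V} (hu₁ : u₁ ∈ children R par v)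
    (hu₂ : u₂ ∈ children R par v) (hne : u₁ ≠ u₂) :
    Disjoint (Sub R par u₁) (Sub R par u₂) := by
  rw [Finset.disjoint_left]
  intro x hx1 hx2
  obtain ⟨hxR, a, ha⟩ := mem_Sub.1 hx1
  obtain ⟨-, b, hb⟩ := mem_Sub.1 hx2
  rcases le_total a b with hab | hab
  · exact hne (child_Sub_disjoint_aux gp hu₁ hu₂ hab hxR ha hb)
  · exact hne (child_Sub_disjoint_aux gp hu₂ hu₁ hab hxR hb ha).symm

lemma exists_child_of_mem_Sub {v x : V} (hx : x ∈ Sub R par v) (hxv : x ≠ v) :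
    ∃ u ∈ children R par v, x ∈ Sub R par u := by
  obtain ⟨hxR, hex⟩ := mem_Sub.1 hx
  have hn := Nat.find_spec hex
  set n := Nat.find hex with hndef
  have hnpos : 0 < n := by
    rcases Nat.eq_zero_or_pos n with h | h
    · rw [h] at hn; exact absurd hn hxv
    · exact h
  set u := par^[n - 1] x with hudef
  have huR : u ∈ R := gp.iterate_mem hxR _
  have hpu : par u = v := by
    rw [hudef, ← Function.iterate_succ_apply' par (n-1) x]
    rw [Nat.succ_eq_add_one, Nat.sub_add_cancel hnpos]
    exact hn
  have hunv : u ≠ v := by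
    intro h
    have := Nat.find_min hex (m := n - 1) (by omega)
    exact this (by rw [← hudef, h])
  exact ⟨u, mem_children.2 ⟨huR, hunv, hpu⟩, mem_Sub.2 ⟨hxR, n - 1, hudef.symm⟩⟩

lemma Sub_decomp {v : V} (hv : v ∈ R) :
    Sub R par v = insert v ((children R par v).biUnion (fun u => Sub R par u)) := by
  apply Finset.Subset.antisymm
  · intro x hx
    by_cases hxv : x = v
    · subst hxv; exact Finset.mem_insert_self _ _
    · obtain ⟨u, hu, hxu⟩ := exists_child_of_mem_Sub gp hx hxv
      exact Finset.mem_insert_of_mem (Finset.mem_biUnion.2 ⟨u, hu, hxu⟩)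
  · intro x hx
    rcases Finset.mem_insert.1 hx with h | h
    · subst h; exact mem_Sub_self hv
    · obtain ⟨u, hu, hxu⟩ := Finset.mem_biUnion.1 h
      exact child_Sub_subset gp hu hxu


lemma biUnion_Sub_subset {v : V} {K : Finset V} (hK : K ⊆ children R par v) :
    K.biUnion (Sub R par) ⊆ R := by
  intro x hx
  obtain ⟨u, -, hxu⟩ := Finset.mem_biUnion.1 hx
  exact Sub_subset hxu

lemma root_not_mem_biUnion {v : V} {K : Finset V} (hK : K ⊆ children R par v) :
    r ∉ K.biUnion (Sub R par) := by
  intro h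
  obtain ⟨u, hu, hxu⟩ := Finset.mem_biUnion.1 h
  exact root_not_mem_child_Sub gp (hK hu) hxu

lemma v_not_mem_biUnion {v : V} {K : Finset V} (hK : K ⊆ children R par v) :
    v ∉ K.biUnion (Sub R par) := by
  intro h
  obtain ⟨u, hu, hxu⟩ := Finset.mem_biUnion.1 h
  exact v_not_mem_child_Sub gp (hK hu) hxu

omit gp in
lemma biUnion_closure {v : V} {K : Finset V} (hK : K ⊆ children R par v) :
    ∀ x ∈ R, par x ∈ K.biUnion (Sub R par) → x ∈ K.biUnion (Sub R par) := by
  intro x hx hpx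
  obtain ⟨u, hu, hxu⟩ := Finset.mem_biUnion.1 hpx
  exact Finset.mem_biUnion.2 ⟨u, hu, mem_Sub_of_par hx hxu⟩

lemma goodPar_sdiff_biUnion {v : V} {K : Finset V} (hK : K ⊆ children R par v) :
    GoodPar G (R \ K.biUnion (Sub R par)) r par :=
  gp.sdiff (root_not_mem_biUnion gp hK) (biUnion_closure hK)

lemma cF_biUnion {c : V → ℝ} {v : V} {K : Finset V} (hK : K ⊆ children R par v) :
    cF c (K.biUnion (Sub R par)) = ∑ u ∈ K, cF c (Sub R par u) := by
  unfold cF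
  refine Finset.sum_biUnion ?_
  intro a ha b hb hab
  exact child_Sub_disjoint gp (hK ha) (hK hb) hab

lemma sdiff_biUnion_eq {v : V} {K K' : Finset V} (hKK : K ⊆ K')
    (hK' : K' ⊆ children R par v) :
    R \ ((K' \ K).biUnion (Sub R par)) =
      (R \ K'.biUnion (Sub R par)) ∪ K.biUnion (Sub R par) := by
  ext x
  simp only [Finset.mem_sdiff, Finset.mem_union, Finset.mem_biUnion]
  constructor
  · rintro ⟨hxR, hno⟩
    by_cases hk : ∃ u ∈ K, x ∈ Sub R par u
    · exact Or.inr hk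
    · refine Or.inl ⟨hxR, ?_⟩
      rintro ⟨u, hu, hxu⟩
      by_cases huK : u ∈ K
      · exact hk ⟨u, huK, hxu⟩
      · exact hno ⟨u, ⟨hu, huK⟩, hxu⟩
  · rintro (⟨hxR, hno⟩ | ⟨u, huK, hxu⟩)
    · refine ⟨hxR, ?_⟩
      rintro ⟨u, hu, hxu⟩
      exact hno ⟨u, hu.1, hxu⟩
    · refine ⟨Sub_subset hxu, ?_⟩
      rintro ⟨u', hu', hxu'⟩
      have hne : u ≠ u' := by
        intro h; subst h
        exact hu'.2 huK
      have hdisj := child_Sub_disjoint gp (hK' (hKK huK)) (hK' hu'.1) hne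
      exact Finset.disjoint_left.1 hdisj hxu hxu'

lemma goodPar_insert_subs {v : V} (hv : v ∈ R) {K : Finset V}
    (hK : K ⊆ children R par v) :
    GoodPar G (insert v (K.biUnion (Sub R par))) v (Function.update par v v) := by
  refine ⟨Finset.mem_insert_self _ _, Function.update_self _ _ _, ?_, ?_⟩
  · intro x hx hxv
    rcases Finset.mem_insert.1 hx with h | h
    · exact absurd h hxv
    obtain ⟨u, huK, hxu⟩ := Finset.mem_biUnion.1 h
    have hu := hK huK
    have hxR : x ∈ R := Sub_subset hxu
    have hxr : x ≠ r := by
      intro he; subst he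
      exact root_not_mem_child_Sub gp hu hxu
    rw [Function.update_of_ne hxv]
    refine ⟨?_, gp.adj hxR hxr⟩
    by_cases hxu' : x = u
    · subst hxu'
      rw [(mem_children.1 hu).2.2]
      exact Finset.mem_insert_self _ _
    · exact Finset.mem_insert_of_mem
        (Finset.mem_biUnion.2 ⟨u, huK, par_mem_Sub gp hxu hxu'⟩)
  · intro x hx
    rcases Finset.mem_insert.1 hx with h | h
    · exact ⟨0, h⟩
    obtain ⟨u, huK, hxu⟩ := Finset.mem_biUnion.1 h
    obtain ⟨-, n, hn⟩ := mem_Sub.1 hxu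
    refine reach_update ⟨n + 1, ?_⟩
    rw [Function.iterate_succ_apply', hn]
    exact (mem_children.1 (hK huK)).2.2

lemma goodPar_Sub {v : V} (hv : v ∈ R) :
    GoodPar G (Sub R par v) v (Function.update par v v) := by
  have h := goodPar_insert_subs gp hv (K := children R par v) (le_refl _)
  rwa [← Sub_decomp gp hv] at h


omit gp

/-- The subgraph determined by a parent structure. -/
noncomputable def parG (G : SimpleGraph V) (A : Finset V) (r : V) (par : V → V) :
    G.Subgraph where
  verts := ↑A
  Adj x y := G.Adj x y ∧ x ∈ A ∧ y ∈ A ∧ ((x ≠ r ∧ par x = y) ∨ (y ≠ r ∧ par y = x))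
  adj_sub h := h.1
  edge_vert h := h.2.1
  symm := by
    constructor
    intro x y h
    exact ⟨h.1.symm, h.2.2.1, h.2.1, h.2.2.2.symm⟩

lemma parG_verts (A : Finset V) (rr : V) (p : V → V) : (parG G A rr p).verts = ↑A := rfl

/-- Depth of a vertex: distance to the root along the parent chain. -/
noncomputable def dpt (par : V → V) (r : V) (x : V) : ℕ :=
  if h : ∃ n : ℕ, par^[n] x = r then Nat.find h else 0

lemma dpt_par_lt {A : Finset V} (gp : GoodPar G A r par) {x : V} (hx : x ∈ A)
    (hxr : x ≠ r) : dpt par r (par x) < dpt par r x := by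
  have hex : ∃ n : ℕ, par^[n] x = r := gp.reach hx
  have hspec := Nat.find_spec hex
  have hpos : 0 < Nat.find hex := by
    rcases Nat.eq_zero_or_pos (Nat.find hex) with h | h
    · rw [h] at hspec; exact absurd hspec hxr
    · exact h
  have hex' : ∃ n : ℕ, par^[n] (par x) = r := by
    refine ⟨Nat.find hex - 1, ?_⟩
    rw [← Function.iterate_succ_apply par, Nat.succ_eq_add_one, Nat.sub_add_cancel hpos]
    exact hspec
  have hle : Nat.find hex' ≤ Nat.find hex - 1 := Nat.find_min' hex' (by
    rw [← Function.iterate_succ_apply par, Nat.succ_eq_add_one, Nat.sub_add_cancel hpos]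
    exact hspec)
  rw [dpt, dif_pos hex', dpt, dif_pos hex]
  omega

lemma parG_reachable {A : Finset V} (gp : GoodPar G A r par) :
    ∀ (n : ℕ) (x : V) (hx : x ∈ A), par^[n] x = r →
      (parG G A r par).coe.Reachable ⟨x, hx⟩ ⟨r, gp.root_mem⟩ := by
  intro n
  induction n with
  | zero =>
    intro x hx hn
    simp only [Function.iterate_zero, id_eq] at hn
    subst hn; rfl
  | succ n ih =>
    intro x hx hn
    by_cases hxr : x = r
    · subst hxr; rfl
    · have hpx : par x ∈ A := gp.par_mem hx hxr
      have hadj : (parG G A r par).coe.Adj ⟨x, hx⟩ ⟨par x, hpx⟩ := by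
        show (parG G A r par).Adj x (par x)
        exact ⟨gp.adj hx hxr, hx, hpx, Or.inl ⟨hxr, rfl⟩⟩
      rw [Function.iterate_succ_apply] at hn
      exact hadj.reachable.trans (ih (par x) hpx hn)

lemma parG_connected {A : Finset V} (gp : GoodPar G A r par) :
    (parG G A r par).coe.Connected := by
  have hr : (r : V) ∈ ((parG G A r par).verts : Set V) := by
    rw [parG_verts]; exact_mod_cast gp.root_mem
  haveI : Nonempty ↥(parG G A r par).verts := ⟨⟨r, hr⟩⟩
  refine ⟨?_⟩
  intro a b
  obtain ⟨x, hx⟩ := a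
  obtain ⟨y, hy⟩ := b
  have hxA : x ∈ A := by exact_mod_cast hx
  have hyA : y ∈ A := by exact_mod_cast hy
  obtain ⟨n, hn⟩ := gp.reach hxA
  obtain ⟨m, hm⟩ := gp.reach hyA
  exact (parG_reachable gp n x hxA hn).trans (parG_reachable gp m y hyA hm).symm

lemma parG_isAcyclic {A : Finset V} (gp : GoodPar G A r par) :
    (parG G A r par).coe.IsAcyclic := by
  intro w c hc
  obtain ⟨x₀, hx₀', hmax'⟩ := Finset.exists_max_image c.support.toFinset
    (fun a => dpt par r ↑a) ⟨w, by simp⟩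
  rw [List.mem_toFinset] at hx₀'
  have hmax : ∀ y ∈ c.support, dpt par r ↑y ≤ dpt par r ↑x₀ := by
    intro y hy
    exact hmax' y (List.mem_toFinset.2 hy)
  have hc' := hc.rotate hx₀'
  set c' := c.rotate x₀ hx₀' with hc'def
  have hsup : ∀ z, z ∈ c'.support → z ∈ c.support := by
    intro z hz
    rw [SimpleGraph.Walk.mem_support_iff] at hz
    rcases hz with h | h
    · subst h; exact hx₀'
    · have hrot := SimpleGraph.Walk.support_rotate c x₀ hx₀'
      rw [← hc'def] at hrot
      have := hrot.mem_iff.1 h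
      exact List.mem_of_mem_tail this
  have key : ∀ (y : ↥(parG G A r par).verts), (parG G A r par).coe.Adj x₀ y →
      (y : V) ∈ c.support.map (Subtype.val) → (y : V) = par ↑x₀ := by
    intro y hadj hy
    have h2 : (parG G A r par).Adj ↑x₀ ↑y := hadj
    obtain ⟨hG, hm1, hm2, hor⟩ := h2
    rcases hor with ⟨hxr, hpx⟩ | ⟨hyr, hpy⟩
    · exact hpx.symm
    · exfalso
      have hlt : dpt par r (par ↑y) < dpt par r ↑y := dpt_par_lt gp hm2 hyr
      rw [hpy] at hlt
      obtain ⟨y', hy', hyy'⟩ := List.mem_map.1 hy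
      have := hmax y' hy'
      rw [hyy'] at this
      omega
  obtain ⟨y, hadj1, q, hq⟩ := SimpleGraph.Walk.not_nil_iff.mp hc'.not_nil
  have hcyc : (SimpleGraph.Walk.cons hadj1 q).IsCycle := hq ▸ hc'
  obtain ⟨hqpath, hqe⟩ := (SimpleGraph.Walk.cons_isCycle_iff q hadj1).1 hcyc
  have hy_mem : (y : V) ∈ c.support.map Subtype.val := by
    refine List.mem_map.2 ⟨y, ?_, rfl⟩
    refine hsup y ?_
    rw [hq]
    simp [SimpleGraph.Walk.support_cons]
  have hy_eq := key y hadj1 hy_mem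
  -- last edge via reverse of q
  have hq_len : 2 ≤ q.length := by
    have h3 := hc'.three_le_length
    rw [hq] at h3
    simp only [SimpleGraph.Walk.length_cons] at h3
    omega
  have hqrev_nnil : ¬ q.reverse.Nil := by
    rw [SimpleGraph.Walk.nil_iff_length_eq, SimpleGraph.Walk.length_reverse]
    omega
  obtain ⟨z, hadj2, q2, hq2⟩ := SimpleGraph.Walk.not_nil_iff.mp hqrev_nnil
  have hz_mem : (z : V) ∈ c.support.map Subtype.val := by
    refine List.mem_map.2 ⟨z, ?_, rfl⟩
    refine hsup z ?_
    have : z ∈ q.reverse.support := by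
      rw [hq2]; simp [SimpleGraph.Walk.support_cons]
    rw [SimpleGraph.Walk.support_reverse, List.mem_reverse] at this
    rw [hq]
    simp only [SimpleGraph.Walk.support_cons, List.mem_cons]
    right; exact this
  have hz_eq := key z hadj2 hz_mem
  have hyz : y = z := Subtype.ext (hy_eq.trans hz_eq.symm)
  have hedge : s(x₀, z) ∈ q.reverse.edges := by
    rw [hq2]
    simp [SimpleGraph.Walk.edges_cons]
  rw [SimpleGraph.Walk.edges_reverse, List.mem_reverse] at hedge
  rw [← hyz] at hedge
  exact hqe hedge

lemma parG_isTree {A : Finset V} (gp : GoodPar G A r par) :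
    (parG G A r par).coe.IsTree :=
  ⟨parG_connected gp, parG_isAcyclic gp⟩


lemma greedy_max {J : Finset V} {w : V → ℝ} {α : ℝ} (hα : 0 < α)
    (hw : ∀ u ∈ J, 0 ≤ w u ∧ w u ≤ α) :
    ∃ J', J' ⊆ J ∧ (∑ u ∈ J', w u ≤ 2 * α) ∧ (J' = J ∨ α < ∑ u ∈ J', w u) := by
  classical
  set fam := J.powerset.filter (fun s => ∑ u ∈ s, w u ≤ 2 * α) with hfam
  have hne : fam.Nonempty := ⟨∅, by
    rw [hfam, Finset.mem_filter, Finset.mem_powerset]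
    exact ⟨Finset.empty_subset _, by simp; positivity⟩⟩
  obtain ⟨J', hJ'mem, hJ'max'⟩ := Finset.exists_maximal hne
  have hJ'max : ∀ x ∈ fam, ¬ J' < x := fun x hx hlt =>
    (lt_iff_le_not_ge.1 hlt).2 (hJ'max' hx hlt.le)
  rw [hfam, Finset.mem_filter, Finset.mem_powerset] at hJ'mem
  refine ⟨J', hJ'mem.1, hJ'mem.2, ?_⟩
  by_cases h : J' = J
  · exact Or.inl h
  · obtain ⟨u, huJ, huJ'⟩ := Finset.exists_of_ssubset (ssubset_of_subset_of_ne hJ'mem.1 h)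
    have hss : J' ⊂ insert u J' := Finset.ssubset_insert huJ'
    have hnotmem : insert u J' ∉ fam := fun hmem => hJ'max _ hmem hss
    have hgt : ¬ (∑ x ∈ insert u J', w x ≤ 2 * α) := by
      intro hle
      exact hnotmem (by
        rw [hfam, Finset.mem_filter, Finset.mem_powerset]
        exact ⟨Finset.insert_subset huJ hJ'mem.1, hle⟩)
    push_neg at hgt
    rw [Finset.sum_insert huJ'] at hgt
    have := (hw u huJ).2
    right; linarith

lemma greedy_min {J : Finset V} {w : V → ℝ} {α b : ℝ} (hb : 0 ≤ b) (hbα : b < α)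
    (hw : ∀ u ∈ J, 0 ≤ w u ∧ w u ≤ α) (htot : α ≤ b + ∑ u ∈ J, w u) :
    ∃ J', J' ⊆ J ∧ α ≤ b + ∑ u ∈ J', w u ∧ b + ∑ u ∈ J', w u < 2 * α := by
  classical
  set fam := J.powerset.filter (fun s => α ≤ b + ∑ u ∈ s, w u) with hfam
  have hne : fam.Nonempty := ⟨J, by
    rw [hfam, Finset.mem_filter, Finset.mem_powerset]
    exact ⟨le_refl _, htot⟩⟩
  obtain ⟨J', hJ'mem, hJ'min'⟩ := Finset.exists_minimal hne
  have hJ'min : ∀ x ∈ fam, ¬ x < J' := fun x hx hlt =>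
    (lt_iff_le_not_ge.1 hlt).2 (hJ'min' hx hlt.le)
  rw [hfam, Finset.mem_filter, Finset.mem_powerset] at hJ'mem
  refine ⟨J', hJ'mem.1, hJ'mem.2, ?_⟩
  have hJ'ne : J'.Nonempty := by
    rcases Finset.eq_empty_or_nonempty J' with h | h
    · exfalso
      rw [h] at hJ'mem
      rw [Finset.sum_empty] at hJ'mem
      linarith [hJ'mem.2]
    · exact h
  obtain ⟨u, hu⟩ := hJ'ne
  have hss : J'.erase u ⊂ J' := Finset.erase_ssubset hu
  have hnotmem : J'.erase u ∉ fam := fun hmem => hJ'min _ hmem hss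
  have hgt : ¬ (α ≤ b + ∑ x ∈ J'.erase u, w x) := by
    intro hle
    exact hnotmem (by
      rw [hfam, Finset.mem_filter, Finset.mem_powerset]
      exact ⟨(Finset.erase_subset _ _).trans hJ'mem.1, hle⟩)
  push_neg at hgt
  have hsum := Finset.sum_erase_add J' w hu
  have hwu := (hw u (hJ'mem.1 hu)).2
  linarith

/-- The decomposition lemma: a rooted structure of cost at least `α` can be covered by
rooted parts, each of cost at least `α`, costing at most `2α` outside its root, with
controlled total excess and part count. -/
lemma decomp {c : V → ℝ} (hc : ∀ v, 0 ≤ c v) {α : ℝ} (hα : 0 < α) :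
    ∀ (N : ℕ) (R : Finset V) (r : V) (par : V → V), R.card ≤ N →
      GoodPar G R r par → α ≤ cF c R →
      ∃ parts : List (Finset V × V),
        (∀ pu ∈ parts, (∃ par', GoodPar G pu.1 pu.2 par') ∧ α ≤ cF c pu.1 ∧
          cF c (pu.1.erase pu.2) ≤ 2 * α) ∧
        (∀ x ∈ R, ∃ pu ∈ parts, x ∈ pu.1) ∧
        ((parts.map fun pu => cF c (pu.1.erase pu.2)).sum ≤ cF c R + 2 * α) ∧
        (parts.length : ℝ) * α ≤ cF c R + α := by
  intro N
  induction N with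
  | zero =>
    intro R r par hcard gp hcR
    have : R = ∅ := Finset.card_eq_zero.mp (Nat.le_zero.mp hcard)
    rw [this] at gp
    exact absurd gp.root_mem (Finset.notMem_empty r)
  | succ N ih =>
    intro R r par hcard gp hcR
    by_cases hbase : cF c R ≤ 2 * α
    · refine ⟨[(R, r)], ?_, ?_, ?_, ?_⟩
      · rintro pu hpu
        rw [List.mem_singleton] at hpu; subst hpu
        exact ⟨⟨par, gp⟩, hcR, le_trans (cF_erase_le hc _ _) hbase⟩
      · intro x hx; exact ⟨(R, r), List.mem_singleton_self _, hx⟩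
      · simp only [List.map_cons, List.map_nil, List.sum_cons, List.sum_nil, add_zero]
        have := cF_erase_le hc R r
        linarith
      · simp only [List.length_singleton, Nat.cast_one, one_mul]
        linarith
    push_neg at hbase
    set cand := R.filter (fun v => α < cF c (Sub R par v)) with hcand
    have hrcand : r ∈ cand := by
      rw [hcand, Finset.mem_filter]
      refine ⟨gp.root_mem, ?_⟩
      rw [Sub_root_eq gp]; linarith
    obtain ⟨v, hvcand, hvmin⟩ :=
      Finset.exists_min_image cand (fun v => (Sub R par v).card) ⟨r, hrcand⟩
    rw [hcand, Finset.mem_filter] at hvcand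
    obtain ⟨hvR, hvα⟩ := hvcand
    set ch := children R par v with hch
    have hch_le : ∀ u ∈ ch, 0 ≤ cF c (Sub R par u) ∧ cF c (Sub R par u) ≤ α := by
      intro u hu
      refine ⟨cF_nonneg hc _, ?_⟩
      by_contra hgt; push_neg at hgt
      have hucand : u ∈ cand := by
        rw [hcand, Finset.mem_filter]
        exact ⟨(mem_children.1 hu).1, hgt⟩
      have hcardle := hvmin u hucand
      have hss : Sub R par u ⊂ Sub R par v := by
        rw [Finset.ssubset_iff_of_subset (child_Sub_subset gp hu)]
        exact ⟨v, mem_Sub_self hvR, v_not_mem_child_Sub gp hu⟩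
      have := Finset.card_lt_card hss
      omega
    obtain ⟨J', hJ'sub, hJ'le, hJ'or⟩ := greedy_max hα hch_le
    set D := J'.biUnion (Sub R par) with hD
    have hDsum : cF c D = ∑ u ∈ J', cF c (Sub R par u) := cF_biUnion gp hJ'sub
    have hDR : D ⊆ R := biUnion_Sub_subset gp hJ'sub
    have hD2α : cF c D ≤ 2 * α := by rw [hDsum]; exact hJ'le
    have hrD : r ∉ D := root_not_mem_biUnion gp hJ'sub
    have hvD : v ∉ D := v_not_mem_biUnion gp hJ'sub
    by_cases hJch : J' = ch
    · -- Case A : all children taken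
      have hdecomp : Sub R par v = insert v D := by
        rw [hD, hJch, hch]; exact Sub_decomp gp hvR
      have herase : (Sub R par v).erase v = D := by
        rw [hdecomp, Finset.erase_insert hvD]
      have hSubD : cF c (Sub R par v) = c v + cF c D := by
        rw [hdecomp, cF_insert hvD]
      have hDsubSv : D ⊆ Sub R par v := by
        rw [hdecomp]; exact Finset.subset_insert _ _
      have hP1gp : GoodPar G (Sub R par v) v (Function.update par v v) := goodPar_Sub gp hvR
      by_cases hvr : v = r
      · -- whole tree is a single part
        have hSvR : Sub R par v = R := by
          subst hvr; exact Sub_root_eq gp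
        refine ⟨[(Sub R par v, v)], ?_, ?_, ?_, ?_⟩
        · rintro pu hpu
          rw [List.mem_singleton] at hpu; subst hpu
          exact ⟨⟨Function.update par v v, hP1gp⟩, le_of_lt hvα, by show cF c ((Sub R par v).erase v) ≤ 2 * α; rw [herase]; exact hD2α⟩
        · intro x hx
          exact ⟨(Sub R par v, v), List.mem_singleton_self _, by rw [hSvR]; exact hx⟩
        · simp only [List.map_cons, List.map_nil, List.sum_cons, List.sum_nil, add_zero]
          rw [herase]
          have h0 : 0 ≤ cF c R := cF_nonneg hc _
          linarith
        · simp only [List.length_singleton, Nat.cast_one, one_mul]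
          rw [hSvR] at hvα
          linarith
      · have hrSv : r ∉ Sub R par v := fun h => hvr (eq_root_of_root_mem_Sub gp h)
        have gpR'' : GoodPar G (R \ Sub R par v) r par :=
          gp.sdiff hrSv (fun x hx hpx => mem_Sub_of_par hx hpx)
        set R'' := R \ Sub R par v with hR''
        have hcR''eq : cF c R'' = cF c R - cF c (Sub R par v) :=
          cF_sdiff Sub_subset
        have hcard'' : R''.card ≤ N := by
          have hss : R'' ⊂ R := by
            rw [hR'', Finset.ssubset_iff_of_subset (Finset.sdiff_subset)]
            exact ⟨v, hvR, fun hmem => (Finset.mem_sdiff.1 hmem).2 (mem_Sub_self hvR)⟩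
          have := Finset.card_lt_card hss
          omega
        by_cases hR''α : α ≤ cF c R''
        · obtain ⟨parts'', hprops, hcov, hsum, hlen⟩ := ih R'' r par hcard'' gpR'' hR''α
          refine ⟨(Sub R par v, v) :: parts'', ?_, ?_, ?_, ?_⟩
          · rintro pu hpu
            rcases List.mem_cons.1 hpu with h | h
            · subst h
              exact ⟨⟨Function.update par v v, hP1gp⟩, le_of_lt hvα, by show cF c ((Sub R par v).erase v) ≤ 2 * α; rw [herase]; exact hD2α⟩
            · exact hprops pu h
          · intro x hx
            by_cases hxS : x ∈ Sub R par v
            · exact ⟨(Sub R par v, v), List.mem_cons_self, hxS⟩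
            · obtain ⟨pu, hpu, hxpu⟩ := hcov x (by rw [hR'']; exact Finset.mem_sdiff.2 ⟨hx, hxS⟩)
              exact ⟨pu, List.mem_cons_of_mem _ hpu, hxpu⟩
          · simp only [List.map_cons, List.sum_cons]
            rw [herase]
            have hcv : 0 ≤ c v := hc v
            linarith
          · simp only [List.length_cons, Nat.cast_add, Nat.cast_one]
            have hcv : 0 ≤ c v := hc v
            have : ((parts''.length : ℝ) + 1) * α = (parts''.length : ℝ) * α + α := by ring
            rw [this]
            linarith
        · push_neg at hR''α
          set base := R \ D with hbasedef
          have hbase_gp : GoodPar G base r par := goodPar_sdiff_biUnion gp hJ'sub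
          have hcbase : cF c base = cF c R - cF c D := cF_sdiff hDR
          have hvbase : v ∈ base := Finset.mem_sdiff.2 ⟨hvR, hvD⟩
          have hbase_erase_sub : base.erase v ⊆ R'' := by
            intro x hx
            rw [Finset.mem_erase] at hx
            obtain ⟨hxv, hxbase⟩ := hx
            rw [Finset.mem_sdiff] at hxbase
            rw [hR'', Finset.mem_sdiff]
            refine ⟨hxbase.1, ?_⟩
            intro hxS
            rw [hdecomp, Finset.mem_insert] at hxS
            rcases hxS with h | h
            · exact hxv h
            · exact hxbase.2 h
          by_cases hbα : α ≤ cF c base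
          · obtain ⟨par₂, hpar₂⟩ := hbase_gp.reroot hvbase
            refine ⟨[(Sub R par v, v), (base, v)], ?_, ?_, ?_, ?_⟩
            · rintro pu hpu
              rcases List.mem_cons.1 hpu with h | h
              · subst h
                exact ⟨⟨Function.update par v v, hP1gp⟩, le_of_lt hvα, by show cF c ((Sub R par v).erase v) ≤ 2 * α; rw [herase]; exact hD2α⟩
              · rw [List.mem_singleton] at h; subst h
                refine ⟨⟨par₂, hpar₂⟩, hbα, ?_⟩
                show cF c (base.erase v) ≤ 2 * α
                have := cF_mono hc hbase_erase_sub
                linarith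
            · intro x hx
              by_cases hxS : x ∈ Sub R par v
              · exact ⟨(Sub R par v, v), List.mem_cons_self, hxS⟩
              · refine ⟨(base, v), by simp, ?_⟩
                rw [hbasedef, Finset.mem_sdiff]
                exact ⟨hx, fun hxD => hxS (hDsubSv hxD)⟩
            · simp only [List.map_cons, List.map_nil, List.sum_cons, List.sum_nil, add_zero]
              rw [herase]
              have := cF_mono hc hbase_erase_sub
              linarith
            · simp only [List.length_cons, List.length_nil]
              push_cast
              linarith
          · push_neg at hbα
            have htot : α ≤ cF c base + ∑ u ∈ ch, cF c (Sub R par u) := by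
              have : ∑ u ∈ ch, cF c (Sub R par u) = cF c D := by
                rw [hDsum, hJch]
              rw [this]
              linarith
            obtain ⟨J₂, hJ₂sub, hJ₂ge, hJ₂lt⟩ :=
              greedy_min (cF_nonneg hc base) hbα hch_le htot
            set Q := R \ ((ch \ J₂).biUnion (Sub R par)) with hQdef
            have hQeq : Q = base ∪ J₂.biUnion (Sub R par) := by
              rw [hQdef, hbasedef, hD, hJch]
              exact sdiff_biUnion_eq gp hJ₂sub (le_refl _)
            have gpQ : GoodPar G Q r par :=
              goodPar_sdiff_biUnion gp ((Finset.sdiff_subset).trans (le_refl _))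
            have hdisjQ : Disjoint base (J₂.biUnion (Sub R par)) := by
              rw [Finset.disjoint_left]
              intro x hxb hxJ
              rw [hbasedef, Finset.mem_sdiff] at hxb
              refine hxb.2 ?_
              rw [hD, hJch]
              obtain ⟨u, hu, hxu⟩ := Finset.mem_biUnion.1 hxJ
              exact Finset.mem_biUnion.2 ⟨u, hJ₂sub hu, hxu⟩
            have hcQ : cF c Q = cF c base + ∑ u ∈ J₂, cF c (Sub R par u) := by
              rw [hQeq]
              unfold cF
              rw [Finset.sum_union hdisjQ]
              have := cF_biUnion gp (c := c) (hJ₂sub.trans (le_refl ch))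
              unfold cF at this
              rw [this]
            refine ⟨[(Sub R par v, v), (Q, r)], ?_, ?_, ?_, ?_⟩
            · rintro pu hpu
              rcases List.mem_cons.1 hpu with h | h
              · subst h
                exact ⟨⟨Function.update par v v, hP1gp⟩, le_of_lt hvα, by show cF c ((Sub R par v).erase v) ≤ 2 * α; rw [herase]; exact hD2α⟩
              · rw [List.mem_singleton] at h; subst h
                refine ⟨⟨par, gpQ⟩, by rw [hcQ]; exact hJ₂ge, ?_⟩
                show cF c (Q.erase r) ≤ 2 * α
                have h1 : cF c (Q.erase r) ≤ cF c Q := cF_erase_le hc _ _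
                rw [hcQ] at h1
                linarith
            · intro x hx
              by_cases hxS : x ∈ Sub R par v
              · exact ⟨(Sub R par v, v), List.mem_cons_self, hxS⟩
              · refine ⟨(Q, r), by simp, ?_⟩
                rw [hQeq, Finset.mem_union]
                left
                rw [hbasedef, Finset.mem_sdiff]
                exact ⟨hx, fun hxD => hxS (hDsubSv hxD)⟩
            · simp only [List.map_cons, List.map_nil, List.sum_cons, List.sum_nil, add_zero]
              rw [herase]
              have h1 : cF c (Q.erase r) ≤ cF c Q := cF_erase_le hc _ _
              rw [hcQ] at h1
              linarith
            · simp only [List.length_cons, List.length_nil]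
              push_cast
              linarith
    · -- Case B : not all children taken; α < cF c D
      have hDα : α < cF c D := by
        rcases hJ'or with h | h
        · exact absurd h hJch
        · rw [hDsum]; exact h
      have gpP : GoodPar G (insert v D) v (Function.update par v v) := by
        rw [hD]; exact goodPar_insert_subs gp hvR hJ'sub
      have herase : (insert v D).erase v = D := Finset.erase_insert hvD
      have hPα : α ≤ cF c (insert v D) := by
        rw [cF_insert hvD]
        have := hc v
        linarith
      set R' := R \ D with hR'
      have gp' : GoodPar G R' r par := goodPar_sdiff_biUnion gp hJ'sub
      have hcR'eq : cF c R' = cF c R - cF c D := cF_sdiff hDR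
      have hDne : D.Nonempty := by
        rcases Finset.eq_empty_or_nonempty D with h | h
        · rw [h] at hDα; unfold cF at hDα; simp at hDα; linarith
        · exact h
      have hcard' : R'.card ≤ N := by
        obtain ⟨d, hd⟩ := hDne
        have hss : R' ⊂ R := by
          rw [hR', Finset.ssubset_iff_of_subset (Finset.sdiff_subset)]
          exact ⟨d, hDR hd, fun hmem => (Finset.mem_sdiff.1 hmem).2 hd⟩
        have := Finset.card_lt_card hss
        omega
      by_cases hR'α : α ≤ cF c R'
      · obtain ⟨parts', hprops, hcov, hsum, hlen⟩ := ih R' r par hcard' gp' hR'α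
        refine ⟨(insert v D, v) :: parts', ?_, ?_, ?_, ?_⟩
        · rintro pu hpu
          rcases List.mem_cons.1 hpu with h | h
          · subst h
            exact ⟨⟨Function.update par v v, gpP⟩, hPα, by show cF c ((insert v D).erase v) ≤ 2 * α; rw [herase]; exact hD2α⟩
          · exact hprops pu h
        · intro x hx
          by_cases hxD : x ∈ D
          · exact ⟨(insert v D, v), List.mem_cons_self, Finset.mem_insert_of_mem hxD⟩
          · obtain ⟨pu, hpu, hxpu⟩ := hcov x (by rw [hR']; exact Finset.mem_sdiff.2 ⟨hx, hxD⟩)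
            exact ⟨pu, List.mem_cons_of_mem _ hpu, hxpu⟩
        · simp only [List.map_cons, List.sum_cons]
          rw [herase]
          linarith
        · simp only [List.length_cons, Nat.cast_add, Nat.cast_one]
          have : ((parts'.length : ℝ) + 1) * α = (parts'.length : ℝ) * α + α := by ring
          rw [this]
          linarith
      · push_neg at hR'α
        have htot : α ≤ cF c R' + ∑ u ∈ J', cF c (Sub R par u) := by
          rw [← hDsum]
          linarith
        have hwJ' : ∀ u ∈ J', 0 ≤ cF c (Sub R par u) ∧ cF c (Sub R par u) ≤ α :=
          fun u hu => hch_le u (hJ'sub hu)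
        obtain ⟨J₂, hJ₂sub, hJ₂ge, hJ₂lt⟩ :=
          greedy_min (cF_nonneg hc R') hR'α hwJ' htot
        set Q := R \ ((J' \ J₂).biUnion (Sub R par)) with hQdef
        have hQeq : Q = R' ∪ J₂.biUnion (Sub R par) := by
          rw [hQdef, hR', hD]
          exact sdiff_biUnion_eq gp hJ₂sub hJ'sub
        have gpQ : GoodPar G Q r par :=
          goodPar_sdiff_biUnion gp ((Finset.sdiff_subset).trans hJ'sub)
        have hdisjQ : Disjoint R' (J₂.biUnion (Sub R par)) := by
          rw [Finset.disjoint_left]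
          intro x hxb hxJ
          rw [hR', Finset.mem_sdiff] at hxb
          refine hxb.2 ?_
          rw [hD]
          obtain ⟨u, hu, hxu⟩ := Finset.mem_biUnion.1 hxJ
          exact Finset.mem_biUnion.2 ⟨u, hJ₂sub hu, hxu⟩
        have hcQ : cF c Q = cF c R' + ∑ u ∈ J₂, cF c (Sub R par u) := by
          rw [hQeq]
          unfold cF
          rw [Finset.sum_union hdisjQ]
          have := cF_biUnion gp (c := c) (hJ₂sub.trans hJ'sub)
          unfold cF at this
          rw [this]
        refine ⟨[(insert v D, v), (Q, r)], ?_, ?_, ?_, ?_⟩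
        · rintro pu hpu
          rcases List.mem_cons.1 hpu with h | h
          · subst h
            exact ⟨⟨Function.update par v v, gpP⟩, hPα, by show cF c ((insert v D).erase v) ≤ 2 * α; rw [herase]; exact hD2α⟩
          · rw [List.mem_singleton] at h; subst h
            refine ⟨⟨par, gpQ⟩, by rw [hcQ]; exact hJ₂ge, ?_⟩
            show cF c (Q.erase r) ≤ 2 * α
            have h1 : cF c (Q.erase r) ≤ cF c Q := cF_erase_le hc _ _
            rw [hcQ] at h1
            linarith
        · intro x hx
          by_cases hxD : x ∈ D
          · exact ⟨(insert v D, v), List.mem_cons_self, Finset.mem_insert_of_mem hxD⟩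
          · refine ⟨(Q, r), by simp, ?_⟩
            rw [hQeq, Finset.mem_union]
            left
            rw [hR', Finset.mem_sdiff]
            exact ⟨hx, hxD⟩
        · simp only [List.map_cons, List.map_nil, List.sum_cons, List.sum_nil, add_zero]
          rw [herase]
          have h1 : cF c (Q.erase r) ≤ cF c Q := cF_erase_le hc _ _
          rw [hcQ] at h1
          linarith
        · simp only [List.length_cons, List.length_nil]
          push_cast
          linarith


lemma exists_goodPar_of_tree [Fintype V] {T : G.Subgraph} (hT : T.coe.IsTree) {r : V}
    (hr : r ∈ T.verts) : ∃ par, GoodPar G T.verts.toFinset r par := by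
  classical
  have hconn : T.coe.Connected := hT.isConnected
  have hstep : ∀ x : ↥T.verts, (x : V) ≠ r → ∃ y : ↥T.verts, T.coe.Adj x y ∧
      T.coe.dist y ⟨r, hr⟩ < T.coe.dist x ⟨r, hr⟩ := by
    intro x hx
    have hne : T.coe.dist x ⟨r, hr⟩ ≠ 0 := by
      rw [SimpleGraph.dist_ne_zero_iff_ne_and_reachable]
      exact ⟨fun h => hx (congrArg Subtype.val h), hconn.preconnected x ⟨r, hr⟩⟩
    obtain ⟨w, hw⟩ := SimpleGraph.exists_walk_of_dist_ne_zero hne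
    have hwnil : ¬ w.Nil := by
      rw [SimpleGraph.Walk.nil_iff_length_eq, hw]
      exact hne
    obtain ⟨y, hadj, q, hq⟩ := SimpleGraph.Walk.not_nil_iff.mp hwnil
    refine ⟨y, hadj, ?_⟩
    have h1 : T.coe.dist y ⟨r, hr⟩ ≤ q.length := SimpleGraph.dist_le q
    have h2 : w.length = q.length + 1 := by rw [hq]; simp
    omega
  set par : V → V := fun x =>
    if hx : x ∈ T.verts ∧ x ≠ r then ((hstep ⟨x, hx.1⟩ hx.2).choose : V) else r
    with hpar
  have hparx : ∀ (x : V) (hx : x ∈ T.verts) (hxr : x ≠ r),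
      par x = ((hstep ⟨x, hx⟩ hxr).choose : V) := by
    intro x hx hxr
    rw [hpar]
    simp only [dif_pos (And.intro hx hxr)]
  refine ⟨par, Set.mem_toFinset.2 hr, by rw [hpar]; simp, ?_, ?_⟩
  · intro x hx hxr
    rw [Set.mem_toFinset] at hx
    rw [hparx x hx hxr]
    obtain ⟨hadj, -⟩ := (hstep ⟨x, hx⟩ hxr).choose_spec
    constructor
    · exact Set.mem_toFinset.2 (hstep ⟨x, hx⟩ hxr).choose.2
    · have := (T.coe_adj _ _) ▸ hadj
      exact T.adj_sub this
  · have claim : ∀ (n : ℕ) (x : V) (hx : x ∈ T.verts),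
        T.coe.dist ⟨x, hx⟩ ⟨r, hr⟩ ≤ n → ∃ m, par^[m] x = r := by
      intro n
      induction n with
      | zero =>
        intro x hx hd
        have h0 : T.coe.dist ⟨x, hx⟩ ⟨r, hr⟩ = 0 := Nat.le_zero.mp hd
        rcases SimpleGraph.dist_eq_zero_iff_eq_or_not_reachable.1 h0 with h | h
        · exact ⟨0, congrArg Subtype.val h⟩
        · exact absurd (hconn.preconnected _ _) h
      | succ n ihn =>
        intro x hx hd
        by_cases hxr : x = r
        · exact ⟨0, hxr⟩
        · obtain ⟨hadj, hdist⟩ := (hstep ⟨x, hx⟩ hxr).choose_spec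
          set y := (hstep ⟨x, hx⟩ hxr).choose with hy
          have hyval : T.coe.dist ⟨(y : V), y.2⟩ ⟨r, hr⟩ ≤ n := by
            have : (⟨(y : V), y.2⟩ : ↥T.verts) = y := rfl
            rw [this]
            omega
          obtain ⟨m, hm⟩ := ihn (y : V) y.2 hyval
          refine ⟨m + 1, ?_⟩
          rw [Function.iterate_succ_apply, hparx x hx hxr, ← hy]
          exact hm
    intro x hx
    rw [Set.mem_toFinset] at hx
    exact claim (T.coe.dist ⟨x, hx⟩ ⟨r, hr⟩) x hx (le_refl _)

lemma exists_goodPar_walkSupport : ∀ {a b : V} (w : G.Walk a b),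
    ∃ par, GoodPar G w.support.toFinset a par := by
  intro a b w
  induction w with
  | nil =>
    refine ⟨id, by simp, rfl, ?_, ?_⟩
    · intro x hx hxa
      simp only [SimpleGraph.Walk.support_nil, List.toFinset_cons, List.toFinset_nil,
        LawfulSingleton.insert_empty_eq, Finset.mem_singleton] at hx
      exact absurd hx hxa
    · intro x hx
      simp only [SimpleGraph.Walk.support_nil, List.toFinset_cons, List.toFinset_nil,
        LawfulSingleton.insert_empty_eq, Finset.mem_singleton] at hx
      exact ⟨0, hx⟩
  | @cons u v' b h w' ih =>
    obtain ⟨par', gp'⟩ := ih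
    have gp2 : GoodPar G {u, v'} u (fun _ => u) := by
      refine ⟨by simp, rfl, ?_, ?_⟩
      · intro x hx hxu
        rw [Finset.mem_insert, Finset.mem_singleton] at hx
        rcases hx with h' | h'
        · exact absurd h' hxu
        · subst h'
          exact ⟨by simp, h.symm⟩
      · intro x hx
        rw [Finset.mem_insert, Finset.mem_singleton] at hx
        rcases hx with h' | h'
        · exact ⟨0, h'⟩
        · exact ⟨1, by simp⟩
    have hglue := gp'.glue gp2 (by simp)
    have heq : w'.support.toFinset ∪ {u, v'} = (SimpleGraph.Walk.cons h w').support.toFinset := by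
      have hv' : v' ∈ w'.support := SimpleGraph.Walk.start_mem_support w'
      ext z
      simp only [Finset.mem_union, List.mem_toFinset, Finset.mem_insert, Finset.mem_singleton,
        SimpleGraph.Walk.support_cons, List.mem_cons]
      constructor
      · rintro (hz | hz | hz)
        · exact Or.inr hz
        · exact Or.inl hz
        · exact Or.inr (hz ▸ hv')
      · rintro (hz | hz)
        · exact Or.inr (Or.inl hz)
        · exact Or.inl hz
    rw [heq] at hglue
    exact ⟨_, hglue⟩

lemma list_sum_lt {A : Type*} {l : List A} (hl : l ≠ []) {f g : A → ℝ}
    (h : ∀ x ∈ l, f x < g x) : (l.map f).sum < (l.map g).sum := by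
  induction l with
  | nil => exact absurd rfl hl
  | cons x t iht =>
    rcases List.eq_nil_or_concat t with ht | ht
    · subst ht
      simpa using h x (by simp)
    · have htne : t ≠ [] := by
        rintro rfl
        obtain ⟨l', a, hl'⟩ := ht
        exact absurd hl' (by simp)
      simp only [List.map_cons, List.sum_cons]
      have h1 := h x (by simp)
      have h2 := iht htne (fun y hy => h y (List.mem_cons_of_mem _ hy))
      linarith

lemma list_sum_affine {A : Type*} (l : List A) (f : A → ℝ) (q d : ℝ) :
    (l.map fun x => q * (f x + d)).sum = q * ((l.map f).sum + l.length * d) := by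
  induction l with
  | nil => simp
  | cons x t iht =>
    simp only [List.map_cons, List.sum_cons, List.length_cons, iht]
    push_cast
    ring

lemma cover_sum {c : V → ℝ} (hc : ∀ v, 0 ≤ c v) :
    ∀ (parts : List (Finset V × V)) (R : Finset V),
      (∀ x ∈ R, ∃ pu ∈ parts, x ∈ pu.1) →
      cF c R ≤ (parts.map fun pu => cF c pu.1).sum := by
  intro parts
  induction parts with
  | nil =>
    intro R hcov
    have hR : R = ∅ := by
      rw [Finset.eq_empty_iff_forall_notMem]
      intro x hx
      obtain ⟨pu, hpu, -⟩ := hcov x hx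
      simp at hpu
    rw [hR]
    simp [cF]
  | cons p t iht =>
    intro R hcov
    classical
    have hsplit : R = (R ∩ p.1) ∪ (R \ p.1) := by
      ext x
      simp only [Finset.mem_union, Finset.mem_inter, Finset.mem_sdiff]
      tauto
    have hdisj : Disjoint (R ∩ p.1) (R \ p.1) := by
      rw [Finset.disjoint_left]
      intro x hx1 hx2
      exact (Finset.mem_sdiff.1 hx2).2 (Finset.mem_inter.1 hx1).2
    have hsum : cF c R = cF c (R ∩ p.1) + cF c (R \ p.1) := by
      conv_lhs => rw [hsplit]
      unfold cF
      exact Finset.sum_union hdisj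
    have h1 : cF c (R ∩ p.1) ≤ cF c p.1 := cF_mono hc (Finset.inter_subset_right)
    have h2 : cF c (R \ p.1) ≤ (t.map fun pu => cF c pu.1).sum := by
      refine iht (R \ p.1) ?_
      intro x hx
      obtain ⟨pu, hpu, hxpu⟩ := hcov x (Finset.mem_sdiff.1 hx).1
      rcases List.mem_cons.1 hpu with h | h
      · subst h
        exact absurd hxpu (Finset.mem_sdiff.1 hx).2
      · exact ⟨pu, h, hxpu⟩
    simp only [List.map_cons, List.sum_cons]
    linarith

end PCSTAux

open PCSTAux

/-- Cost (or prize) of a subgraph: sum of the weight function over its vertex set. -/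
noncomputable def sgCost {V : Type*} {G : SimpleGraph V} (c : V → ℝ) (H : G.Subgraph) : ℝ :=
  ∑ᶠ v ∈ H.verts, c v

/-- Cost of a walk: total cost of the vertices on the walk, including both endpoints. -/
def walkCost {V : Type*} (c : V → ℝ) {G : SimpleGraph V} {u v : V} (w : G.Walk u v) : ℝ :=
  (w.support.map c).sum

/-- `G` is `B`-proper for `r`: every vertex can be reached from `r` by a path of
vertex-cost at most `B` (i.e. `d^c(r,v) ≤ B` for all `v`). -/
def BProper {V : Type*} (G : SimpleGraph V) (c : V → ℝ) (r : V) (B : ℝ) : Prop :=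
  ∀ v : V, ∃ p : G.Path r v, walkCost c p.1 ≤ B

theorem stmt0 {V : Type*} [Fintype V] {G : SimpleGraph V}
    (c prz : V → ℝ) (hc : ∀ v, 0 ≤ c v) (hprz : ∀ v, 0 ≤ prz v)
    (B ε : ℝ) (hB : 0 < B) (hε0 : 0 < ε) (hε1 : ε ≤ 1)
    (r : V) (hproper : BProper G c r B)
    (T : G.Subgraph) (hT : T.coe.IsTree) (hrT : r ∈ T.verts)
    (hcost : ε * B / 2 ≤ sgCost c T) :
    ∃ Tstar : G.Subgraph, Tstar.coe.IsTree ∧ r ∈ Tstar.verts ∧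
      ε / 4 * (sgCost prz T / sgCost c T) ≤ sgCost prz Tstar / sgCost c Tstar ∧
      ε / 2 * B ≤ sgCost c Tstar ∧ sgCost c Tstar ≤ (1 + ε) * B := by
  classical
  have hcT : sgCost c T = cF c T.verts.toFinset := by
    unfold sgCost cF
    conv_lhs => rw [← Set.coe_toFinset T.verts]
    exact finsum_mem_coe_finset c _
  have hpT : sgCost prz T = cF prz T.verts.toFinset := by
    unfold sgCost cF
    conv_lhs => rw [← Set.coe_toFinset T.verts]
    exact finsum_mem_coe_finset prz _
  have hcTpos : 0 < sgCost c T := lt_of_lt_of_le (by positivity) hcost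
  have hγ0 : 0 ≤ sgCost prz T / sgCost c T := by
    apply div_nonneg _ hcTpos.le
    rw [hpT]
    exact cF_nonneg hprz _
  by_cases hbig : sgCost c T ≤ (1 + ε) * B
  · refine ⟨T, hT, hrT, ?_, by linarith, hbig⟩
    nlinarith [hγ0, hε1, hε0]
  · push_neg at hbig
    set α := ε * B / 2 with hαdef
    have hα : 0 < α := by positivity
    obtain ⟨par₀, gp₀⟩ := exists_goodPar_of_tree hT hrT
    have hcR : α ≤ cF c T.verts.toFinset := by rw [← hcT]; exact hcost
    obtain ⟨parts, hprops, hcov, hsum, hlen⟩ :=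
      decomp hc hα (T.verts.toFinset.card) T.verts.toFinset r par₀ le_rfl gp₀ hcR
    set γ := sgCost prz T / sgCost c T with hγdef
    set K := cF c T.verts.toFinset with hKdef
    have hKbig : (1 + ε) * B < K := by rw [← hcT]; exact hbig
    have hKpos : 0 < K := by nlinarith
    have hπK : cF prz T.verts.toFinset = γ * K := by
      rw [hγdef, hpT, hcT]
      exact (div_mul_cancel₀ _ hKpos.ne').symm
    have hgood : ∃ pu ∈ parts,
        ε / 4 * γ * (cF c (pu.1.erase pu.2) + B) ≤ cF prz pu.1 := by
      by_contra hno
      push_neg at hno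
      have hne : parts ≠ [] := by
        obtain ⟨pu, hpu, -⟩ := hcov r (Set.mem_toFinset.2 hrT)
        intro h; rw [h] at hpu; simp at hpu
      have hlt := list_sum_lt hne (f := fun pu => cF prz pu.1)
        (g := fun pu => ε / 4 * γ * (cF c (pu.1.erase pu.2) + B)) hno
      have hcover := cover_sum hprz parts T.verts.toFinset hcov
      have haff := list_sum_affine parts (fun pu => cF c (pu.1.erase pu.2)) (ε / 4 * γ) B
      set Sc := (parts.map fun pu => cF c (pu.1.erase pu.2)).sum with hScdef
      set k := (parts.length : ℝ) with hkdef
      have hk0 : 0 ≤ k := by rw [hkdef]; positivity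
      have harith : ε / 4 * (Sc + k * B) ≤ K := by
        have h1 : ε / 4 * (k * B) ≤ K / 2 + ε * B / 4 := by
          rw [hαdef] at hlen
          nlinarith [hlen]
        have h2 : ε / 4 * Sc ≤ ε / 4 * (K + ε * B) := by
          have := hsum
          rw [hαdef] at this
          nlinarith [this, hε0]
        have h3 : ε / 4 * (K + ε * B) + K / 2 + ε * B / 4 ≤ K := by
          nlinarith [hKbig, hε1, hε0, hB]
        nlinarith [h1, h2, h3]
      have hfinal : γ * K < γ * K := by
        calc γ * K = cF prz T.verts.toFinset := hπK.symm
        _ ≤ (parts.map fun pu => cF prz pu.1).sum := hcover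
        _ < (parts.map fun pu => ε / 4 * γ * (cF c (pu.1.erase pu.2) + B)).sum := hlt
        _ = ε / 4 * γ * (Sc + k * B) := haff
        _ = γ * (ε / 4 * (Sc + k * B)) := by ring
        _ ≤ γ * K := mul_le_mul_of_nonneg_left harith hγ0
      exact absurd hfinal (lt_irrefl _)
    obtain ⟨pu, hpu, hπpu⟩ := hgood
    obtain ⟨⟨parP, gpP⟩, hPα, hPe⟩ := hprops pu hpu
    obtain ⟨p, hp⟩ := hproper pu.2
    set W := p.1.support.toFinset with hWdef
    have hcW : cF c W ≤ B := by
      rw [hWdef, cF, List.sum_toFinset _ p.2.support_nodup]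
      exact hp
    have hu_W : pu.2 ∈ W := by
      rw [hWdef, List.mem_toFinset]
      exact SimpleGraph.Walk.end_mem_support p.1
    have hr_W : r ∈ W := by
      rw [hWdef, List.mem_toFinset]
      exact SimpleGraph.Walk.start_mem_support p.1
    obtain ⟨parW, gpW⟩ := exists_goodPar_walkSupport p.1
    set A := pu.1 ∪ W with hAdef
    set parA : V → V := fun z => if z ∈ W then parW z else parP z with hparA
    have gpA : GoodPar G A r parA := gpP.glue gpW hu_W
    have hrA : r ∈ A := Finset.mem_union.2 (Or.inr hr_W)
    have hcA_low : α ≤ cF c A :=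
      le_trans hPα (cF_mono hc Finset.subset_union_left)
    have hcA_pos : 0 < cF c A := lt_of_lt_of_le hα hcA_low
    have hA_sub : A ⊆ (pu.1.erase pu.2) ∪ W := by
      intro x hx
      rcases Finset.mem_union.1 hx with h | h
      · by_cases hxu : x = pu.2
        · exact Finset.mem_union.2 (Or.inr (hxu ▸ hu_W))
        · exact Finset.mem_union.2 (Or.inl (Finset.mem_erase.2 ⟨hxu, h⟩))
      · exact Finset.mem_union.2 (Or.inr h)
    have hcA_up : cF c A ≤ cF c (pu.1.erase pu.2) + B :=
      le_trans (le_trans (cF_mono hc hA_sub) (cF_union_le hc _ _)) (by linarith)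
    have hcA_up2 : cF c A ≤ (1 + ε) * B := by
      rw [hαdef] at hPe
      linarith
    have hπA : cF prz pu.1 ≤ cF prz A := cF_mono hprz Finset.subset_union_left
    refine ⟨parG G A r parA, parG_isTree gpA, ?_, ?_, ?_, ?_⟩
    · show r ∈ (↑A : Set V)
      exact_mod_cast hrA
    · have hcostA : sgCost c (parG G A r parA) = cF c A := finsum_mem_coe_finset c A
      have hprzA : sgCost prz (parG G A r parA) = cF prz A := finsum_mem_coe_finset prz A
      rw [hcostA, hprzA]
      rw [le_div_iff₀ hcA_pos]
      calc ε / 4 * γ * cF c A ≤ ε / 4 * γ * (cF c (pu.1.erase pu.2) + B) := by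
            apply mul_le_mul_of_nonneg_left hcA_up
            positivity
      _ ≤ cF prz pu.1 := hπpu
      _ ≤ cF prz A := hπA
    · have hcostA : sgCost c (parG G A r parA) = cF c A := finsum_mem_coe_finset c A
      rw [hcostA]
      rw [hαdef] at hcA_low
      linarith
    · have hcostA : sgCost c (parG G A r parA) = cF c A := finsum_mem_coe_finset c A
      rw [hcostA]
      exact hcA_up2
end

section
/- Let B > 0 and ε ∈ (0,1], let r be a vertex of G, and assume G is B-proper for r. If there exists a tree T' in G containing r with c(T') ≤ 2B, then there exists a tree T in G containing r with c(T) ≤ (1+ε)·B and π(T) ≥ (ε²/16)·π(T'). -/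
open scoped Classical

section Aux
variable {V : Type*} {G : SimpleGraph V} (T' : G.Subgraph)

/-- One step of adjacency inside a finite vertex set, via edges of `T'`. -/
def StepIn (A : Finset V) (x y : V) : Prop := x ∈ A ∧ y ∈ A ∧ T'.Adj x y

/-- Reachability inside a finite vertex set. -/
def ReachIn (A : Finset V) (a b : V) : Prop := Relation.ReflTransGen (StepIn T' A) a b

/-- Connectivity of a finite vertex set w.r.t. `T'`-edges. -/
def ConnIn (A : Finset V) : Prop := ∀ a ∈ A, ∀ b ∈ A, ReachIn T' A a b

/-- The connected component of `a` inside `A`. -/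
noncomputable def compIn (A : Finset V) (a : V) : Finset V :=
  A.filter (fun b => ReachIn T' A a b)

variable {T'}

lemma reachIn_symm {A : Finset V} {a b : V} (h : ReachIn T' A a b) : ReachIn T' A b a := by
  induction h with
  | refl => exact Relation.ReflTransGen.refl
  | tail _ hstep ih =>
    exact Relation.ReflTransGen.trans
      (Relation.ReflTransGen.single ⟨hstep.2.1, hstep.1, hstep.2.2.symm⟩) ih

lemma reachIn_mono {A B : Finset V} (hAB : A ⊆ B) {a b : V} (h : ReachIn T' A a b) :
    ReachIn T' B a b :=
  Relation.ReflTransGen.mono (r := StepIn T' A) (p := StepIn T' B)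
    (fun _ _ hs => ⟨hAB hs.1, hAB hs.2.1, hs.2.2⟩) a b h

lemma reachIn_mem {A : Finset V} {a b : V} (h : ReachIn T' A a b) (ha : a ∈ A) : b ∈ A := by
  induction h with
  | refl => exact ha
  | tail _ hstep _ => exact hstep.2.1

lemma compIn_subset {A : Finset V} {a : V} : compIn T' A a ⊆ A := Finset.filter_subset _ _

lemma mem_compIn_self {A : Finset V} {a : V} (ha : a ∈ A) : a ∈ compIn T' A a :=
  Finset.mem_filter.2 ⟨ha, Relation.ReflTransGen.refl⟩

lemma reachIn_compIn {A : Finset V} {a b : V} (ha : a ∈ A) (h : ReachIn T' A a b) :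
    ReachIn T' (compIn T' A a) a b := by
  induction h with
  | refl => exact Relation.ReflTransGen.refl
  | @tail b' c' hb' hstep ih =>
    refine Relation.ReflTransGen.tail ih ⟨?_, ?_, hstep.2.2⟩
    · exact Finset.mem_filter.2 ⟨hstep.1, hb'⟩
    · exact Finset.mem_filter.2 ⟨hstep.2.1, Relation.ReflTransGen.tail hb' hstep⟩

lemma connIn_compIn {A : Finset V} {a : V} (ha : a ∈ A) : ConnIn T' (compIn T' A a) := by
  intro u hu v hv
  have hu' := (Finset.mem_filter.1 hu).2
  have hv' := (Finset.mem_filter.1 hv).2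
  exact Relation.ReflTransGen.trans (reachIn_symm (reachIn_compIn ha hu'))
    (reachIn_compIn ha hv')

lemma compIn_eq_of_mem {A : Finset V} {a b : V} (hb : b ∈ compIn T' A a) :
    compIn T' A b = compIn T' A a := by
  have hab : ReachIn T' A a b := (Finset.mem_filter.1 hb).2
  ext z
  simp only [compIn, Finset.mem_filter]
  exact ⟨fun ⟨hz, h⟩ => ⟨hz, Relation.ReflTransGen.trans hab h⟩,
    fun ⟨hz, h⟩ => ⟨hz, Relation.ReflTransGen.trans (reachIn_symm hab) h⟩⟩

/-- Remainder connectivity: if no `T'`-edge leaves `D` except into `v`, then `A \ D`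
is still connected. -/
lemma connIn_sdiff {A D : Finset V} {v : V} (hconn : ConnIn T' A) (hv : v ∈ A) (hvD : v ∉ D)
    (hD : ∀ d ∈ D, ∀ u ∈ A, T'.Adj d u → u ∈ D ∨ u = v) :
    ConnIn T' (A \ D) := by
  have key : ∀ b ∈ A \ D, ReachIn T' (A \ D) b v := by
    intro b hb
    have hbA := (Finset.mem_sdiff.1 hb).1
    have h : ReachIn T' A b v := hconn b hbA v hv
    clear hbA
    induction h using Relation.ReflTransGen.head_induction_on with
    | refl => exact Relation.ReflTransGen.refl
    | @head b' c' hstep _ ih =>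
      by_cases hcD : c' ∈ D
      · rcases hD c' hcD b' hstep.1 hstep.2.2.symm with h' | h'
        · exact absurd h' (Finset.mem_sdiff.1 hb).2
        · exact h' ▸ Relation.ReflTransGen.refl
      · have hc' : c' ∈ A \ D := Finset.mem_sdiff.2 ⟨hstep.2.1, hcD⟩
        exact Relation.ReflTransGen.head ⟨hb, hc', hstep.2.2⟩ (ih hc')
  intro a ha b hb
  exact Relation.ReflTransGen.trans (key a ha)
    (reachIn_symm (key b hb))

/-- A boundary edge exists between a nonempty proper part and the rest. -/
lemma exists_boundary {A S : Finset V} (hconn : ConnIn T' A) (hS : S ⊆ A)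
    (hne : S.Nonempty) (hne' : (A \ S).Nonempty) :
    ∃ a ∈ S, ∃ b ∈ A \ S, T'.Adj a b := by
  by_contra hcon
  push_neg at hcon
  obtain ⟨s, hs⟩ := hne
  obtain ⟨t, ht⟩ := hne'
  have h : ReachIn T' A s t := hconn s (hS hs) t (Finset.mem_sdiff.1 ht).1
  have : ∀ b, ReachIn T' A s b → b ∈ S := by
    intro b hb
    induction hb with
    | refl => exact hs
    | @tail b' c' _ hstep ih =>
      by_contra hc
      exact hcon b' ih c' (Finset.mem_sdiff.2 ⟨hstep.2.1, hc⟩) hstep.2.2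
  exact (Finset.mem_sdiff.1 ht).2 (this t h)

/-- Each component of `S₀ \ {v}` contains a neighbour of `v`. -/
lemma exists_nbr_in_comp {S₀ : Finset V} {v u : V} (hconn : ConnIn T' S₀) (hv : v ∈ S₀)
    (hu : u ∈ S₀.erase v) :
    ∃ z ∈ compIn T' (S₀.erase v) u, T'.Adj v z := by
  by_contra hcon
  push_neg at hcon
  have h : ReachIn T' S₀ u v := hconn u (Finset.mem_of_mem_erase hu) v hv
  have key : ∀ b, ReachIn T' S₀ u b → b ∈ compIn T' (S₀.erase v) u := by
    intro b hb
    induction hb with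
    | refl => exact mem_compIn_self hu
    | @tail b' c' hb' hstep ih =>
      have hb'e : b' ∈ S₀.erase v := compIn_subset ih
      by_cases hcv : c' = v
      · exact absurd (hcv ▸ hstep.2.2.symm) (hcon b' ih)
      · have hce : c' ∈ S₀.erase v := Finset.mem_erase.2 ⟨hcv, hstep.2.1⟩
        have : c' ∈ compIn T' (S₀.erase v) b' :=
          Finset.mem_filter.2 ⟨hce, Relation.ReflTransGen.single ⟨hb'e, hce, hstep.2.2⟩⟩
        rwa [compIn_eq_of_mem ih] at this
  have hvmem := key v h
  exact (Finset.mem_erase.1 (compIn_subset hvmem)).1 rfl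

lemma reachIn_coeWalk {A : Finset V} (hA : ↑A ⊆ T'.verts) {a b : V} (ha : a ∈ A)
    (hb : b ∈ A) (h : ReachIn T' A a b) :
    ∃ w : T'.coe.Walk ⟨a, hA ha⟩ ⟨b, hA hb⟩, ∀ z ∈ w.support, ↑z ∈ A := by
  induction h with
  | refl => exact ⟨SimpleGraph.Walk.nil, by simpa using ha⟩
  | @tail b' c' hb' hstep ih =>
    obtain ⟨w, hw⟩ := ih (reachIn_mem hb' ha)
    have hadj : T'.coe.Adj ⟨b', hA hstep.1⟩ ⟨c', hA hb⟩ := hstep.2.2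
    refine ⟨w.concat hadj, ?_⟩
    intro z hz
    rw [SimpleGraph.Walk.support_concat, List.mem_append] at hz
    rcases hz with hz | hz
    · exact hw z hz
    · simp only [List.mem_singleton] at hz
      subst hz
      exact hstep.2.1

/-- In a tree, there is at most one boundary edge between a connected part
and its connected complement. -/
lemma boundary_unique (hac : T'.coe.IsAcyclic) {A S : Finset V} (hA : ↑A ⊆ T'.verts)
    (hS : S ⊆ A) (hconnS : ConnIn T' S) (hconnC : ConnIn T' (A \ S))
    {a₁ b₁ a₂ b₂ : V} (ha₁ : a₁ ∈ S) (hb₁ : b₁ ∈ A \ S) (ha₂ : a₂ ∈ S) (hb₂ : b₂ ∈ A \ S)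
    (e₁ : T'.Adj a₁ b₁) (e₂ : T'.Adj a₂ b₂) : a₁ = a₂ ∧ b₁ = b₂ := by
  have hSv : ↑S ⊆ T'.verts := fun z hz => hA (hS hz)
  have hCv : ↑(A \ S) ⊆ T'.verts := fun z hz => hA (Finset.sdiff_subset hz)
  obtain ⟨w₁, hw₁⟩ := reachIn_coeWalk hSv ha₁ ha₂ (hconnS a₁ ha₁ a₂ ha₂)
  obtain ⟨w₂, hw₂⟩ := reachIn_coeWalk hCv hb₂ hb₁ (hconnC b₂ hb₂ b₁ hb₁)
  have hadj2 : T'.coe.Adj ⟨a₂, hSv ha₂⟩ ⟨b₂, hCv hb₂⟩ := e₂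
  have hadj1 : T'.coe.Adj ⟨a₁, hSv ha₁⟩ ⟨b₁, hCv hb₁⟩ := e₁
  set W : T'.coe.Walk ⟨a₁, hSv ha₁⟩ ⟨b₁, hCv hb₁⟩ :=
    w₁.append (SimpleGraph.Walk.cons hadj2 w₂) with hW
  have hPeq : SimpleGraph.Path.singleton hadj1 = W.toPath := hac.path_unique _ _
  have hmem : s(⟨a₁, hSv ha₁⟩, ⟨b₁, hCv hb₁⟩) ∈ W.toPath.1.edges := by
    rw [← hPeq]
    simp [SimpleGraph.Path.singleton]
  have hmem' := SimpleGraph.Walk.edges_toPath_subset W hmem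
  rw [hW, SimpleGraph.Walk.edges_append, SimpleGraph.Walk.edges_cons, List.mem_append,
    List.mem_cons] at hmem'
  rcases hmem' with h | h | h
  · exact absurd (hw₁ _ (SimpleGraph.Walk.snd_mem_support_of_mem_edges w₁ h) : b₁ ∈ S)
      (Finset.mem_sdiff.1 hb₁).2
  · rw [Sym2.eq_iff] at h
    rcases h with ⟨h1, h2⟩ | ⟨h1, h2⟩
    · exact ⟨congrArg Subtype.val h1, congrArg Subtype.val h2⟩
    · exfalso
      have : a₁ = b₂ := congrArg Subtype.val h1
      exact (Finset.mem_sdiff.1 hb₂).2 (this ▸ ha₁)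
  · exact absurd (hw₂ _ (SimpleGraph.Walk.fst_mem_support_of_mem_edges w₂ h) : a₁ ∈ A \ S)
      (fun h' => (Finset.mem_sdiff.1 h').2 ha₁)

lemma select_subfamily {α : Type*} {x : ℝ} (hx : 0 < x) (f : α → ℝ)
    (Q : Finset α) (hQ : ∀ K ∈ Q, f K ≤ x) :
    ∃ Q' ⊆ Q, (∑ K ∈ Q', f K) ≤ 3 * x / 2 ∧ (x / 2 < ∑ K ∈ Q', f K ∨ Q' = Q) := by
  classical
  induction Q using Finset.induction_on with
  | empty => exact ⟨∅, Finset.Subset.refl _, by simp; linarith, Or.inr rfl⟩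
  | @insert K Q hK ih =>
    obtain ⟨Q', hQ'sub, hQ'le, hQ'alt⟩ := ih (fun K' hK' => hQ K' (Finset.mem_insert_of_mem hK'))
    rcases hQ'alt with h | rfl
    · exact ⟨Q', hQ'sub.trans (Finset.subset_insert _ _), hQ'le, Or.inl h⟩
    · by_cases h : x / 2 < ∑ K' ∈ Q', f K'
      · exact ⟨Q', Finset.subset_insert _ _, hQ'le, Or.inl h⟩
      · push_neg at h
        refine ⟨insert K Q', Finset.Subset.refl _, ?_, Or.inr rfl⟩
        rw [Finset.sum_insert hK]
        have := hQ K (Finset.mem_insert_self _ _)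
        linarith

/-- The peeling lemma: from a connected set of cost `> x` we can split off a
cheap connected piece of cost `≥ x/2` keeping the remainder connected. -/
lemma peel (hac : T'.coe.IsAcyclic) (c : V → ℝ) (hc : ∀ v, 0 ≤ c v)
    {x : ℝ} (hx : 0 < x) {A : Finset V} (hA : ↑A ⊆ T'.verts) (hconn : ConnIn T' A)
    (hcA : x < ∑ w ∈ A, c w) :
    ∃ (S : Finset V) (v : V) (D : Finset V), S ⊆ A ∧ v ∈ S ∧ ConnIn T' S ∧
      (∑ w ∈ S, c w) ≤ c v + 3 * x / 2 ∧ D ⊆ S ∧ x / 2 ≤ ∑ w ∈ D, c w ∧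
      (D = A ∨ ((A \ D).Nonempty ∧ ConnIn T' (A \ D))) := by
  classical
  -- the family of connected "pendant" subsets of cost > x
  set F : Finset (Finset V) := A.powerset.filter
    (fun S => S.Nonempty ∧ ConnIn T' S ∧ (S = A ∨ ConnIn T' (A \ S)) ∧ x < ∑ w ∈ S, c w)
    with hF
  have hAne : A.Nonempty := by
    rcases Finset.eq_empty_or_nonempty A with rfl | h
    · simp at hcA; linarith
    · exact h
  have hAF : A ∈ F := by
    rw [hF, Finset.mem_filter]
    exact ⟨Finset.mem_powerset_self _, hAne, hconn, Or.inl rfl, hcA⟩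
  obtain ⟨S₀, hS₀F, hmin⟩ := Finset.exists_min_image F Finset.card ⟨A, hAF⟩
  rw [hF, Finset.mem_filter, Finset.mem_powerset] at hS₀F
  obtain ⟨hS₀A, hS₀ne, hS₀conn, hS₀alt, hS₀c⟩ := hS₀F
  -- choose the designated vertex `v`
  have hbd : ∃ v ∈ S₀, (S₀ = A ∨ ConnIn T' (A \ S₀)) ∧
      ∀ a ∈ S₀, ∀ b ∈ A \ S₀, T'.Adj a b → a = v := by
    rcases hS₀alt with h | hCconn
    · obtain ⟨v, hv⟩ := hS₀ne
      exact ⟨v, hv, Or.inl h, fun a _ b hb _ => absurd hb (by simp [h])⟩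
    · by_cases hSA : S₀ = A
      · obtain ⟨v, hv⟩ := hS₀ne
        exact ⟨v, hv, Or.inl hSA, fun a _ b hb _ => absurd hb (by simp [hSA])⟩
      · have hCne : (A \ S₀).Nonempty := by
          rw [Finset.sdiff_nonempty]
          exact fun hsub => hSA (Finset.Subset.antisymm hS₀A hsub)
        obtain ⟨a₁, ha₁, b₁, hb₁, he₁⟩ := exists_boundary hconn hS₀A hS₀ne hCne
        refine ⟨a₁, ha₁, Or.inr hCconn, fun a ha b hb he => ?_⟩
        exact (boundary_unique hac hA hS₀A hS₀conn hCconn ha hb ha₁ hb₁ he he₁).1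
  obtain ⟨v, hv, hS₀alt', hbd⟩ := hbd
  set A' : Finset V := S₀.erase v with hA'
  -- any `T'`-edge out of `A'` stays in the component or goes to `v`
  have hedge : ∀ d ∈ A', ∀ u ∈ A, T'.Adj d u → u ∈ compIn T' A' d ∨ u = v := by
    intro d hd u hu hadj
    by_cases huS : u ∈ S₀
    · by_cases huv : u = v
      · exact Or.inr huv
      · have hu' : u ∈ A' := Finset.mem_erase.2 ⟨huv, huS⟩
        exact Or.inl (Finset.mem_filter.2 ⟨hu',
          Relation.ReflTransGen.single ⟨hd, hu', hadj⟩⟩)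
    · exfalso
      have hd' : d ∈ S₀ := Finset.mem_of_mem_erase hd
      have := hbd d hd' u (Finset.mem_sdiff.2 ⟨hu, huS⟩) hadj
      exact (Finset.mem_erase.1 hd).1 this
  -- components of `A'` all have cost at most `x`
  set Q : Finset (Finset V) := A'.image (fun u => compIn T' A' u) with hQdef
  have hKsub : ∀ K ∈ Q, K ⊆ A' ∧ ∃ u ∈ A', K = compIn T' A' u := by
    intro K hK
    rw [hQdef, Finset.mem_image] at hK
    obtain ⟨u, hu, rfl⟩ := hK
    exact ⟨compIn_subset, u, hu, rfl⟩
  have hKrep : ∀ K ∈ Q, ∀ d ∈ K, K = compIn T' A' d := by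
    intro K hK d hd
    obtain ⟨-, u, hu, rfl⟩ := hKsub K hK
    exact (compIn_eq_of_mem hd).symm
  have hQx : ∀ K ∈ Q, (∑ w ∈ K, c w) ≤ x := by
    intro K hK
    obtain ⟨hKA', u, hu, rfl⟩ := hKsub K hK
    by_contra hcon
    push_neg at hcon
    have hKF : compIn T' A' u ∈ F := by
      rw [hF, Finset.mem_filter, Finset.mem_powerset]
      refine ⟨hKA'.trans ((Finset.erase_subset _ _).trans hS₀A),
        ⟨u, mem_compIn_self hu⟩, connIn_compIn hu, Or.inr ?_, hcon⟩
      refine connIn_sdiff hconn (hS₀A hv) (fun h => (Finset.mem_erase.1 (hKA' h)).1 rfl) ?_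
      intro d hd u' hu' hadj
      rcases hedge d (hKA' hd) u' hu' hadj with h | h
      · exact Or.inl (by rwa [← hKrep _ hK d hd] at h)
      · exact Or.inr h
    have hlt : (compIn T' A' u).card < S₀.card :=
      lt_of_le_of_lt (Finset.card_le_card hKA') (Finset.card_erase_lt_of_mem hv)
    exact absurd (hmin _ hKF) (not_le.2 hlt)
  -- select a subfamily
  obtain ⟨Q', hQ'Q, hQ'le, hQ'alt⟩ := select_subfamily hx (fun K => ∑ w ∈ K, c w) Q hQx
  have hdisj : (↑Q' : Set (Finset V)).PairwiseDisjoint id := by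
    intro K hK K' hK' hne
    simp only [Function.onFun, id]
    rw [Finset.disjoint_left]
    intro z hzK hzK'
    exact hne ((hKrep K (hQ'Q hK) z hzK).trans (hKrep K' (hQ'Q hK') z hzK').symm)
  set D₀ : Finset V := Q'.biUnion id with hD₀
  have hsumD₀ : (∑ w ∈ D₀, c w) = ∑ K ∈ Q', ∑ w ∈ K, c w := Finset.sum_biUnion hdisj
  have hD₀A' : D₀ ⊆ A' := by
    intro z hz
    rw [hD₀, Finset.mem_biUnion] at hz
    obtain ⟨K, hK, hzK⟩ := hz
    exact (hKsub K (hQ'Q hK)).1 hzK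
  have hvD₀ : v ∉ D₀ := fun h => (Finset.mem_erase.1 (hD₀A' h)).1 rfl
  by_cases hbig : x / 2 < ∑ K ∈ Q', ∑ w ∈ K, c w
  · -- peel off `{v} ∪ D₀`
    refine ⟨insert v D₀, v, D₀, ?_, Finset.mem_insert_self _ _, ?_, ?_,
      Finset.subset_insert _ _, by rw [hsumD₀]; linarith, Or.inr ⟨⟨v, ?_⟩, ?_⟩⟩
    · exact Finset.insert_subset (hS₀A hv)
        (hD₀A'.trans ((Finset.erase_subset _ _).trans hS₀A))
    · -- connectivity of `insert v D₀`
      have key : ∀ a ∈ insert v D₀, ReachIn T' (insert v D₀) a v := by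
        intro a ha
        rcases Finset.mem_insert.1 ha with rfl | haD
        · exact Relation.ReflTransGen.refl
        · rw [hD₀, Finset.mem_biUnion] at haD
          obtain ⟨K, hK, haK⟩ := haD
          have haA' : a ∈ A' := (hKsub K (hQ'Q hK)).1 haK
          obtain ⟨z, hz, hadj⟩ := exists_nbr_in_comp hS₀conn hv haA'
          rw [← hKrep K (hQ'Q hK) a haK] at hz
          have hKD₀ : K ⊆ insert v D₀ := fun w hw =>
            Finset.mem_insert_of_mem (Finset.mem_biUnion.2 ⟨K, hK, hw⟩)
          have h1 : ReachIn T' K a z := by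
            have := connIn_compIn (T' := T') haA'
            rw [← hKrep K (hQ'Q hK) a haK] at this
            exact this a haK z hz
          exact Relation.ReflTransGen.tail (reachIn_mono hKD₀ h1)
            ⟨hKD₀ hz, Finset.mem_insert_self _ _, hadj.symm⟩
      intro a ha b hb
      exact Relation.ReflTransGen.trans (key a ha) (reachIn_symm (key b hb))
    · -- cost bound
      rw [Finset.sum_insert hvD₀, hsumD₀]
      linarith
    · exact Finset.mem_sdiff.2 ⟨hS₀A hv, hvD₀⟩
    · -- remainder connected
      refine connIn_sdiff hconn (hS₀A hv) hvD₀ ?_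
      intro d hd u hu hadj
      have hdK : ∃ K ∈ Q', d ∈ K := Finset.mem_biUnion.1 hd
      obtain ⟨K, hK, hdK⟩ := hdK
      rcases hedge d (hD₀A' hd) u hu hadj with h | h
      · exact Or.inl (Finset.mem_biUnion.2 ⟨K, hK, by rwa [hKrep K (hQ'Q hK) d hdK]⟩)
      · exact Or.inr h
  · -- no big subfamily: `S₀` itself is cheap, peel all of it
    rcases hQ'alt with h | rfl
    · exact absurd h hbig
    push_neg at hbig
    have hQA' : D₀ = A' := by
      apply Finset.Subset.antisymm hD₀A'
      intro u hu
      rw [hD₀, Finset.mem_biUnion]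
      exact ⟨compIn T' A' u, Finset.mem_image_of_mem _ hu, mem_compIn_self hu⟩
    have hsumA' : (∑ w ∈ A', c w) ≤ x / 2 := by
      rw [← hQA', hsumD₀]; exact hbig
    have hsumS₀ : (∑ w ∈ S₀, c w) = c v + ∑ w ∈ A', c w := by
      rw [hA', Finset.add_sum_erase _ _ hv]
    refine ⟨S₀, v, S₀, hS₀A, hv, hS₀conn, by rw [hsumS₀]; linarith,
      Finset.Subset.refl _, by linarith, ?_⟩
    by_cases hSA : S₀ = A
    · exact Or.inl hSA
    · refine Or.inr ⟨?_, ?_⟩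
      · rw [Finset.sdiff_nonempty]
        exact fun hsub => hSA (Finset.Subset.antisymm hS₀A hsub)
      · rcases hS₀alt' with h | h
        · exact absurd h hSA
        · exact h

/-- Decomposition of a connected set into few cheap connected pieces. -/
lemma decomp (hac : T'.coe.IsAcyclic) (c : V → ℝ) (hc : ∀ v, 0 ≤ c v)
    {x : ℝ} (hx : 0 < x) :
    ∀ (n : ℕ) (A : Finset V), A.card ≤ n → A.Nonempty → ↑A ⊆ T'.verts → ConnIn T' A →
    ∃ L : List (Finset V × V),
      (∀ p ∈ L, p.1 ⊆ A ∧ p.2 ∈ p.1 ∧ ConnIn T' p.1 ∧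
        (∑ w ∈ p.1, c w) ≤ c p.2 + 3 * x / 2) ∧
      (∀ a ∈ A, ∃ p ∈ L, a ∈ p.1) ∧
      (L.length : ℝ) * (x / 2) ≤ (∑ w ∈ A, c w) + x / 2 := by
  intro n
  induction n with
  | zero =>
    intro A hcard hne _ _
    exact absurd (Finset.card_pos.2 hne) (by omega)
  | succ n ih =>
    intro A hcard hne hA hconn
    have hsumnn : 0 ≤ ∑ w ∈ A, c w := Finset.sum_nonneg (fun w _ => hc w)
    by_cases hcA : (∑ w ∈ A, c w) ≤ x
    · obtain ⟨a, ha⟩ := hne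
      refine ⟨[(A, a)], ?_, ?_, ?_⟩
      · rintro p hp
        simp only [List.mem_singleton] at hp
        subst hp
        refine ⟨Finset.Subset.refl _, ha, hconn, ?_⟩
        have := hc a
        linarith
      · intro b hb; exact ⟨(A, a), List.mem_singleton_self _, hb⟩
      · simp; linarith
    · push_neg at hcA
      obtain ⟨S, v, D, hSA, hvS, hSconn, hScost, hDS, hDcost, halt⟩ :=
        peel hac c hc hx hA hconn hcA
      rcases halt with rfl | ⟨hne', hconn'⟩
      · refine ⟨[(S, v)], ?_, ?_, ?_⟩
        · rintro p hp
          simp only [List.mem_singleton] at hp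
          subst hp
          exact ⟨hSA, hvS, hSconn, hScost⟩
        · intro b hb; exact ⟨(S, v), List.mem_singleton_self _, hDS hb⟩
        · simp; linarith
      · have hDne : D.Nonempty := by
          rcases Finset.eq_empty_or_nonempty D with rfl | h
          · simp at hDcost; linarith
          · exact h
        have hDA : D ⊆ A := hDS.trans hSA
        have hlt : (A \ D).card < A.card :=
          Finset.card_lt_card (Finset.sdiff_ssubset hDA hDne)
        obtain ⟨L', hL'p, hL'cov, hL'len⟩ := ih (A \ D) (by omega) hne'
          (fun z hz => hA (Finset.sdiff_subset hz)) hconn'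
        refine ⟨(S, v) :: L', ?_, ?_, ?_⟩
        · rintro p hp
          rcases List.mem_cons.1 hp with rfl | hp
          · exact ⟨hSA, hvS, hSconn, hScost⟩
          · obtain ⟨h1, h2, h3, h4⟩ := hL'p p hp
            exact ⟨h1.trans Finset.sdiff_subset, h2, h3, h4⟩
        · intro b hb
          by_cases hbD : b ∈ D
          · exact ⟨(S, v), List.mem_cons_self, hDS hbD⟩
          · obtain ⟨p, hp, hbp⟩ := hL'cov b (Finset.mem_sdiff.2 ⟨hb, hbD⟩)
            exact ⟨p, List.mem_cons_of_mem _ hp, hbp⟩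
        · have hsd : (∑ w ∈ A \ D, c w) + ∑ w ∈ D, c w = ∑ w ∈ A, c w :=
            Finset.sum_sdiff hDA
          simp only [List.length_cons]
          push_cast
          linarith

/-- A covered set's weight is at most the total weight of the pieces. -/
lemma cover_sum (π : V → ℝ) (hπ : ∀ v, 0 ≤ π v) :
    ∀ (L : List (Finset V × V)) (A : Finset V), (∀ a ∈ A, ∃ p ∈ L, a ∈ p.1) →
    (∑ w ∈ A, π w) ≤ (L.map (fun p => ∑ w ∈ p.1, π w)).sum := by
  intro L
  induction L with
  | nil =>
    intro A hcov
    have : A = ∅ := by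
      rcases Finset.eq_empty_or_nonempty A with rfl | ⟨a, ha⟩
      · rfl
      · obtain ⟨p, hp, -⟩ := hcov a ha
        exact absurd hp List.not_mem_nil
    simp [this]
  | cons p L ih =>
    intro A hcov
    have h1 : (∑ w ∈ A ∩ p.1, π w) + ∑ w ∈ A \ p.1, π w = ∑ w ∈ A, π w :=
      Finset.sum_inter_add_sum_sdiff A p.1 π
    have h2 : (∑ w ∈ A ∩ p.1, π w) ≤ ∑ w ∈ p.1, π w :=
      Finset.sum_le_sum_of_subset_of_nonneg Finset.inter_subset_right
        (fun w hw _ => hπ w)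
    have h3 : (∑ w ∈ A \ p.1, π w) ≤ (L.map (fun q => ∑ w ∈ q.1, π w)).sum := by
      apply ih
      intro a ha
      obtain ⟨q, hq, haq⟩ := hcov a (Finset.mem_sdiff.1 ha).1
      rcases List.mem_cons.1 hq with rfl | hq
      · exact absurd haq (Finset.mem_sdiff.1 ha).2
      · exact ⟨q, hq, haq⟩
    simp only [List.map_cons, List.sum_cons]
    linarith

/-- Some element of a nonempty list is at least the average. -/
lemma exists_ge_avg {α : Type*} (f : α → ℝ) :
    ∀ (L : List α), L ≠ [] → ∃ p ∈ L, (L.map f).sum ≤ (L.length : ℝ) * f p := by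
  intro L
  induction L with
  | nil => intro h; exact absurd rfl h
  | cons a L ih =>
    intro _
    rcases List.eq_nil_or_concat L with rfl | -
    · exact ⟨a, List.mem_singleton_self _, by simp⟩
    by_cases hL : L = []
    · exact ⟨a, List.mem_cons_self, by simp [hL]⟩
    · obtain ⟨p, hp, hple⟩ := ih hL
      rcases le_total (f a) (f p) with h | h
      · refine ⟨p, List.mem_cons_of_mem _ hp, ?_⟩
        simp only [List.map_cons, List.sum_cons, List.length_cons]
        push_cast
        nlinarith [hple]
      · refine ⟨a, List.mem_cons_self, ?_⟩
        simp only [List.map_cons, List.sum_cons, List.length_cons]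
        push_cast
        have hlen : (0 : ℝ) ≤ L.length := Nat.cast_nonneg _
        nlinarith [hple]

/-- Deleting a non-bridge edge preserves reachability. -/
lemma reachable_delete {W : Type*} {H : SimpleGraph W} {v w : W}
    (h : (H \ SimpleGraph.fromEdgeSet {s(v, w)}).Reachable v w) :
    ∀ a b : W, H.Reachable a b → (H \ SimpleGraph.fromEdgeSet {s(v, w)}).Reachable a b := by
  intro a b ⟨p⟩
  induction p with
  | nil => exact SimpleGraph.Reachable.refl _
  | @cons a c b hadj p ih =>
    refine SimpleGraph.Reachable.trans ?_ ih
    by_cases he : s(a, c) = s(v, w)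
    · rw [Sym2.eq_iff] at he
      rcases he with ⟨rfl, rfl⟩ | ⟨rfl, rfl⟩
      · exact h
      · exact h.symm
    · refine SimpleGraph.Adj.reachable ?_
      rw [SimpleGraph.sdiff_adj, SimpleGraph.fromEdgeSet_adj]
      exact ⟨hadj, fun hcon => he hcon.1⟩

/-- Every finite connected graph contains a spanning tree. -/
lemma exists_tree_le {W : Type*} [Fintype W] :
    ∀ (m : ℕ) (H : SimpleGraph W), H.edgeSet.ncard ≤ m → H.Connected →
    ∃ T : SimpleGraph W, T ≤ H ∧ T.IsTree := by
  intro m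
  induction m with
  | zero =>
    intro H hcard hconn
    by_cases hac : H.IsAcyclic
    · exact ⟨H, le_refl _, hconn, hac⟩
    · exfalso
      rw [SimpleGraph.isAcyclic_iff_forall_adj_isBridge] at hac
      push_neg at hac
      obtain ⟨v, w, hadj, -⟩ := hac
      have : s(v, w) ∈ H.edgeSet := hadj
      have h1 : H.edgeSet.Nonempty := ⟨_, this⟩
      have := Set.ncard_pos (Set.toFinite _) |>.2 h1
      omega
  | succ m ih =>
    intro H hcard hconn
    by_cases hac : H.IsAcyclic
    · exact ⟨H, le_refl _, hconn, hac⟩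
    · rw [SimpleGraph.isAcyclic_iff_forall_adj_isBridge] at hac
      push_neg at hac
      obtain ⟨v, w, hadj, hnb⟩ := hac
      rw [SimpleGraph.isBridge_iff] at hnb
      push_neg at hnb
      have hreach : (H \ SimpleGraph.fromEdgeSet {s(v, w)}).Reachable v w := hnb
      set H' := H \ SimpleGraph.fromEdgeSet {s(v, w)} with hH'
      have hconn' : H'.Connected := by
        rw [SimpleGraph.connected_iff]
        exact ⟨fun a b => reachable_delete hreach a b (hconn.preconnected a b),
          hconn.nonempty⟩
      have hE : H'.edgeSet = H.edgeSet \ {s(v, w)} := by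
        rw [hH', SimpleGraph.edgeSet_sdiff, SimpleGraph.edgeSet_fromEdgeSet,
          SimpleGraph.edgeSet_sdiff_sdiff_isDiag]
      have hlt : H'.edgeSet.ncard < H.edgeSet.ncard := by
        rw [hE]
        exact Set.ncard_diff_singleton_lt_of_mem hadj (Set.toFinite _)
      obtain ⟨T, hT, hTtree⟩ := ih H' (by omega) hconn'
      exact ⟨T, hT.trans sdiff_le, hTtree⟩

lemma coeWalk_reachIn [Fintype ↥T'.verts] {u v : ↥T'.verts} (w : T'.coe.Walk u v) :
    ReachIn T' T'.verts.toFinset ↑u ↑v := by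
  induction w with
  | nil => exact Relation.ReflTransGen.refl
  | @cons a b c hadj p ih =>
    exact Relation.ReflTransGen.head
      ⟨Set.mem_toFinset.2 a.2, Set.mem_toFinset.2 b.2, hadj⟩ ih

end Aux


theorem stmt1 {V : Type*} [Fintype V] {G : SimpleGraph V}
    (c prz : V → ℝ) (hc : ∀ v, 0 ≤ c v) (hprz : ∀ v, 0 ≤ prz v)
    (B ε : ℝ) (hB : 0 < B) (hε0 : 0 < ε) (hε1 : ε ≤ 1)
    (r : V) (hproper : BProper G c r B)
    (T' : G.Subgraph) (hT' : T'.coe.IsTree) (hrT' : r ∈ T'.verts)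
    (hcost : sgCost c T' ≤ 2 * B) :
    ∃ T : G.Subgraph, T.coe.IsTree ∧ r ∈ T.verts ∧
      sgCost c T ≤ (1 + ε) * B ∧
      ε ^ 2 / 16 * sgCost prz T' ≤ sgCost prz T := by
  classical
  haveI : Fintype ↥T'.verts := Fintype.ofFinite _
  set A : Finset V := T'.verts.toFinset with hAdef
  have hAsub : ↑A ⊆ T'.verts := by rw [hAdef]; simp
  have hAconn : ConnIn T' A := by
    intro a ha b hb
    rw [hAdef, Set.mem_toFinset] at ha hb
    obtain ⟨w⟩ := hT'.isConnected.preconnected ⟨a, ha⟩ ⟨b, hb⟩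
    exact coeWalk_reachIn w
  have hAne : A.Nonempty := ⟨r, Set.mem_toFinset.2 hrT'⟩
  have hfin : ∀ f : V → ℝ, (∑ᶠ w ∈ T'.verts, f w) = ∑ w ∈ A, f w := by
    intro f
    rw [hAdef, ← finsum_mem_coe_finset, Set.coe_toFinset]
  have hsgc : sgCost c T' = ∑ w ∈ A, c w := hfin c
  have hsgp : sgCost prz T' = ∑ w ∈ A, prz w := hfin prz
  rw [hsgc] at hcost
  set x : ℝ := ε * B / 2 with hxdef
  have hx : 0 < x := by positivity
  obtain ⟨L, hLparts, hLcov, hLlen⟩ :=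
    decomp (T' := T') hT'.IsAcyclic c hc hx A.card A le_rfl hAne hAsub hAconn
  have hLne : L ≠ [] := by
    rintro rfl
    obtain ⟨p, hp, -⟩ := hLcov r (Set.mem_toFinset.2 hrT')
    exact List.not_mem_nil hp
  obtain ⟨p₀, hp₀L, hp₀avg⟩ := exists_ge_avg (fun p => ∑ w ∈ p.1, prz w) L hLne
  have hcovsum := cover_sum prz hprz L A hLcov
  obtain ⟨hSA, hvS, hSconn, hScost⟩ := hLparts p₀ hp₀L
  set S : Finset V := p₀.1 with hSdef
  set v : V := p₀.2 with hvdef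
  -- the prize bound for S
  have hSnn : (0:ℝ) ≤ ∑ w ∈ S, prz w := Finset.sum_nonneg (fun w _ => hprz w)
  have hAnn : (0:ℝ) ≤ ∑ w ∈ A, prz w := Finset.sum_nonneg (fun w _ => hprz w)
  have hlen0 : (0:ℝ) ≤ (L.length : ℝ) := Nat.cast_nonneg _
  have hklen : (L.length : ℝ) * ε ≤ 8 + ε := by
    rw [hxdef] at hLlen
    nlinarith [hLlen, hcost, hB]
  have hk2 : (L.length : ℝ) * ε ^ 2 ≤ 16 := by nlinarith
  have hprize : ε ^ 2 / 16 * (∑ w ∈ A, prz w) ≤ ∑ w ∈ S, prz w := by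
    have h1 : (∑ w ∈ A, prz w) ≤ (L.length : ℝ) * ∑ w ∈ S, prz w :=
      le_trans hcovsum hp₀avg
    nlinarith [mul_le_mul_of_nonneg_right hk2 hSnn, mul_le_mul_of_nonneg_left h1
      (by positivity : (0:ℝ) ≤ ε ^ 2 / 16)]
  -- the connecting path
  obtain ⟨pa, hpa⟩ := hproper v
  set U : Finset V := pa.1.support.toFinset ∪ S with hUdef
  have hvsup : v ∈ pa.1.support.toFinset := List.mem_toFinset.2 pa.1.end_mem_support
  have hrU : r ∈ U := Finset.mem_union_left _ (List.mem_toFinset.2 pa.1.start_mem_support)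
  -- the connected subgraph
  set Hs : G.Subgraph :=
    { verts := ↑U
      Adj := fun a b => s(a, b) ∈ pa.1.edges ∨ (T'.Adj a b ∧ a ∈ S ∧ b ∈ S)
      adj_sub := by
        rintro a b (h | ⟨h, -, -⟩)
        · exact pa.1.adj_of_mem_edges h
        · exact T'.adj_sub h
      edge_vert := by
        rintro a b (h | ⟨-, hS', -⟩)
        · exact Finset.mem_coe.2 (Finset.mem_union_left _
            (List.mem_toFinset.2 (SimpleGraph.Walk.fst_mem_support_of_mem_edges _ h)))
        · exact Finset.mem_coe.2 (Finset.mem_union_right _ hS')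
      symm := by
        constructor
        rintro a b (h | ⟨h, h1, h2⟩)
        · exact Or.inl (Sym2.eq_swap ▸ h)
        · exact Or.inr ⟨h.symm, h2, h1⟩ } with hHsdef
  have hmemHs : ∀ {z : V}, z ∈ U → z ∈ Hs.verts := fun hz => Finset.mem_coe.2 hz
  -- walks within pa give reachability in Hs
  have walk_reach : ∀ {a b : V} (w : G.Walk a b), (∀ e ∈ w.edges, e ∈ pa.1.edges) →
      ∀ (ha : a ∈ Hs.verts) (hb : b ∈ Hs.verts), Hs.coe.Reachable ⟨a, ha⟩ ⟨b, hb⟩ := by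
    intro a b w
    induction w with
    | nil => intro _ ha hb; exact SimpleGraph.Reachable.refl _
    | @cons a' c' b' hadj w ih =>
      intro hw ha hb
      have he : s(a', c') ∈ pa.1.edges := hw _ (by simp)
      have hHadj : Hs.Adj a' c' := Or.inl he
      have hc' : c' ∈ Hs.verts := hHadj.snd_mem
      exact (hHadj.coe).reachable.trans (ih (fun e he' => hw e (by simp [he'])) hc' hb)
  have reach_r : ∀ (u : ↥Hs.verts), Hs.coe.Reachable u ⟨r, hmemHs hrU⟩ := by
    rintro ⟨z, hz⟩
    have hz' : z ∈ U := Finset.mem_coe.1 hz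
    rcases Finset.mem_union.1 hz' with hzs | hzS
    · have hzsup : z ∈ pa.1.support := List.mem_toFinset.1 hzs
      have := walk_reach (pa.1.takeUntil z hzsup)
        (fun e he => pa.1.edges_takeUntil_subset hzsup he) (hmemHs hrU) hz
      exact this.symm
    · -- z ∈ S : reach v within S, then v to r along the path
      have hreach : ReachIn T' S v z := hSconn v hvS z hzS
      have hSU : ∀ {y : V}, y ∈ S → y ∈ Hs.verts :=
        fun hy => hmemHs (Finset.mem_union_right _ hy)
      have key : ∀ {y : V} (hy : y ∈ S), ReachIn T' S v y →
          Hs.coe.Reachable ⟨v, hSU hvS⟩ ⟨y, hSU hy⟩ := by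
        intro y hy hr'
        induction hr' with
        | refl => exact SimpleGraph.Reachable.refl _
        | @tail b' c' hb' hstep ih =>
          have hHadj : Hs.Adj b' c' := Or.inr ⟨hstep.2.2, hstep.1, hstep.2.1⟩
          exact (ih hstep.1).trans (hHadj.coe).reachable
      have h1 : Hs.coe.Reachable ⟨v, hSU hvS⟩ ⟨z, hz⟩ := key hzS hreach
      have h2 : Hs.coe.Reachable ⟨r, hmemHs hrU⟩ ⟨v, hSU hvS⟩ :=
        walk_reach pa.1 (fun e he => he) _ _
      exact (h1.symm.trans h2.symm)
  have hHconn : Hs.coe.Connected := by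
    rw [SimpleGraph.connected_iff]
    refine ⟨fun u w => (reach_r u).trans (reach_r w).symm, ⟨⟨r, hmemHs hrU⟩⟩⟩
  -- spanning tree
  obtain ⟨T₀, hT₀le, hT₀tree⟩ := exists_tree_le Hs.coe.edgeSet.ncard Hs.coe le_rfl hHconn
  set Tfin : G.Subgraph :=
    { verts := Hs.verts
      Adj := fun a b => ∃ (ha : a ∈ Hs.verts) (hb : b ∈ Hs.verts),
        T₀.Adj ⟨a, ha⟩ ⟨b, hb⟩
      adj_sub := by rintro a b ⟨ha, hb, h⟩; exact Hs.coe_adj_sub _ _ (hT₀le h)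
      edge_vert := by rintro a b ⟨ha, hb, h⟩; exact ha
      symm := by constructor; rintro a b ⟨ha, hb, h⟩; exact ⟨hb, ha, h.symm⟩ } with hTfin
  have hcoe : Tfin.coe = T₀ := by
    ext u w
    simp only [SimpleGraph.Subgraph.coe_adj]
    constructor
    · rintro ⟨ha, hb, h⟩
      cases u; cases w; exact h
    · intro h
      exact ⟨u.2, w.2, by cases u; cases w; exact h⟩
  have hTc : sgCost c Tfin = ∑ w ∈ U, c w := finsum_mem_coe_finset _ _
  have hTp : sgCost prz Tfin = ∑ w ∈ U, prz w := finsum_mem_coe_finset _ _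
  refine ⟨Tfin, ?_, hmemHs hrU, ?_, ?_⟩
  · rw [hcoe]; exact hT₀tree
  · -- cost bound
    rw [hTc]
    have hsplit : (∑ w ∈ U, c w) =
        (∑ w ∈ pa.1.support.toFinset, c w) + ∑ w ∈ S \ pa.1.support.toFinset, c w := by
      rw [hUdef, ← Finset.union_sdiff_self_eq_union, Finset.sum_union Finset.disjoint_sdiff]
    have hsup : (∑ w ∈ pa.1.support.toFinset, c w) = walkCost c pa.1 :=
      List.sum_toFinset _ pa.2.support_nodup
    have h2 : (∑ w ∈ S \ pa.1.support.toFinset, c w) ≤ ∑ w ∈ S.erase v, c w := by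
      refine Finset.sum_le_sum_of_subset_of_nonneg ?_ (fun w _ _ => hc w)
      intro w hw
      rw [Finset.mem_sdiff] at hw
      exact Finset.mem_erase.2 ⟨fun h => hw.2 (h ▸ hvsup), hw.1⟩
    have h3 : c v + (∑ w ∈ S.erase v, c w) = ∑ w ∈ S, c w :=
      Finset.add_sum_erase _ _ hvS
    rw [hxdef] at hScost
    nlinarith [hpa, mul_pos hε0 hB]
  · -- prize bound
    rw [hTp, hsgp]
    have h4 : (∑ w ∈ S, prz w) ≤ ∑ w ∈ U, prz w := by
      refine Finset.sum_le_sum_of_subset_of_nonneg ?_ (fun w _ _ => hprz w)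
      rw [hUdef]
      exact Finset.subset_union_right
    linarith
end

section
/- Let B > 0. Call a tree flat if every one of its vertices has cost at most B/2, and saddled if it contains a vertex x with c(x) > B/2 such that every other vertex of the tree has cost at most (B − c(x))/2. Then for every tree T in G with c(T) ≤ B, there exists a connected subgraph T' of T that is a tree, is flat or saddled, and satisfies π(T') ≥ π(T)/2. -/
open scoped Classical

/-- A tree (subgraph) is flat if every one of its vertices has cost at most `B/2`. -/
def IsFlat {V : Type*} {G : SimpleGraph V} (c : V → ℝ) (B : ℝ) (H : G.Subgraph) : Prop :=
  ∀ v ∈ H.verts, c v ≤ B / 2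

/-- A tree (subgraph) is saddled if it contains a vertex `x` with `c x > B/2` such that
every other vertex of the tree has cost at most `(B - c x) / 2`. -/
def IsSaddled {V : Type*} {G : SimpleGraph V} (c : V → ℝ) (B : ℝ) (H : G.Subgraph) : Prop :=
  ∃ x ∈ H.verts, B / 2 < c x ∧ ∀ v ∈ H.verts, v ≠ x → c v ≤ (B - c x) / 2

section Aux

variable {V : Type*} {G : SimpleGraph V}

lemma aux_toSubgraph_le {H : G.Subgraph} {u v : V} (p : G.Walk u v)
    (hs : ∀ w ∈ p.support, w ∈ H.verts)
    (he : ∀ a b : V, s(a, b) ∈ p.edges → H.Adj a b) :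
    p.toSubgraph ≤ H := by
  constructor
  · intro w hw
    exact hs w (p.mem_verts_toSubgraph.mp hw)
  · intro a b hab
    exact he a b (p.mem_edges_toSubgraph.mp hab)

lemma aux_adj_of_toSubgraph_le {H : G.Subgraph} {u v : V} {p : G.Walk u v}
    (hp : p.toSubgraph ≤ H) {a b : V} (hab : s(a, b) ∈ p.edges) : H.Adj a b :=
  hp.2 (p.mem_edges_toSubgraph.mpr hab)

lemma aux_verts_of_toSubgraph_le {H : G.Subgraph} {u v : V} {p : G.Walk u v}
    (hp : p.toSubgraph ≤ H) {a : V} (ha : a ∈ p.support) : a ∈ H.verts :=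
  hp.1 (p.mem_verts_toSubgraph.mpr ha)

lemma aux_acyclic_le {H K : G.Subgraph} (h : H ≤ K) (hK : K.coe.IsAcyclic) :
    H.coe.IsAcyclic := by
  intro v c hc
  exact hK (c.map (SimpleGraph.Subgraph.inclusion h))
    (hc.map (SimpleGraph.Subgraph.inclusion.injective h))

lemma aux_induce_le {H : G.Subgraph} {s : Set V} (hs : s ⊆ H.verts) : H.induce s ≤ H := by
  constructor
  · exact hs
  · intro a b hab
    exact hab.2.2

lemma aux_sgCost_eq (c : V → ℝ) (H : G.Subgraph) [Fintype V] :
    sgCost c H = ∑ v ∈ H.verts.toFinset, c v := by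
  rw [sgCost, ← finsum_mem_coe_finset, Set.coe_toFinset]

lemma aux_sum_le_sgCost [Fintype V] (c : V → ℝ) (hc : ∀ v, 0 ≤ c v) (H : G.Subgraph)
    (s : Finset V) (hs : ∀ v ∈ s, v ∈ H.verts) : ∑ v ∈ s, c v ≤ sgCost c H := by
  rw [aux_sgCost_eq]
  exact Finset.sum_le_sum_of_subset_of_nonneg
    (fun v hv => Set.mem_toFinset.mpr (hs v hv)) (fun v _ _ => hc v)

end Aux

theorem stmt3 {V : Type*} [Fintype V] {G : SimpleGraph V}
    (c prz : V → ℝ) (hc : ∀ v, 0 ≤ c v) (hprz : ∀ v, 0 ≤ prz v)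
    (B : ℝ) (hB : 0 < B)
    (T : G.Subgraph) (hT : T.coe.IsTree) (hcost : sgCost c T ≤ B) :
    ∃ T' : G.Subgraph, T' ≤ T ∧ T'.coe.IsTree ∧
      (IsFlat c B T' ∨ IsSaddled c B T') ∧
      sgCost prz T / 2 ≤ sgCost prz T' := by
  classical
  have hTpos : 0 ≤ sgCost prz T := by
    rw [aux_sgCost_eq]
    exact Finset.sum_nonneg fun v _ => hprz v
  have hTconn : T.Connected := SimpleGraph.Subgraph.connected_iff'.mpr hT.isConnected
  have hwalk : ∀ {u v : V}, u ∈ T.verts → v ∈ T.verts →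
      ∃ p : G.Walk u v, p.toSubgraph ≤ T :=
    fun hu hv => (SimpleGraph.Subgraph.preconnected_iff_forall_exists_walk_subgraph T).mp
      hTconn.preconnected hu hv
  by_cases hflat : IsFlat c B T
  · exact ⟨T, le_rfl, hT, Or.inl hflat, by linarith⟩
  unfold IsFlat at hflat
  push_neg at hflat
  obtain ⟨x, hxT, hx⟩ := hflat
  by_cases hsad : ∀ v ∈ T.verts, v ≠ x → c v ≤ (B - c x) / 2
  · exact ⟨T, le_rfl, hT, Or.inr ⟨x, hxT, hx, hsad⟩, by linarith⟩
  push_neg at hsad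
  obtain ⟨y, hyT, hyx, hy⟩ := hsad
  -- the component of T - x containing y
  set C : Set V := {v : V | v ∈ T.verts ∧ v ≠ x ∧
      ∃ p : G.Walk v y, p.toSubgraph ≤ T ∧ x ∉ p.support} with hCdef
  set S : Set V := T.verts \ C with hSdef
  have hCsub : C ⊆ T.verts := fun v hv => hv.1
  have hSsub : S ⊆ T.verts := Set.diff_subset
  have hyC : y ∈ C := ⟨hyT, hyx, SimpleGraph.Walk.nil, by
    constructor
    · constructor
      · intro w hw
        simp only [SimpleGraph.Walk.verts_toSubgraph] at hw
        simp only [SimpleGraph.Walk.support_nil, List.mem_singleton, Set.mem_setOf_eq] at hw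
        subst hw; exact hyT
      · intro a b hab
        simp only [SimpleGraph.Walk.toSubgraph] at hab
        exact absurd hab (by simp [SimpleGraph.singletonSubgraph_adj])
    · intro h
      rw [SimpleGraph.Walk.support_nil, List.mem_singleton] at h
      exact hyx h.symm⟩
  have hxS : x ∈ S := ⟨hxT, fun hxC => hxC.2.1 rfl⟩
  -- membership in C is closed along walks avoiding x
  have hCclosed : ∀ {v : V} (p : G.Walk v y), p.toSubgraph ≤ T → x ∉ p.support →
      ∀ w ∈ p.support, w ∈ C := by
    intro v p hpT hpx w hw
    refine ⟨aux_verts_of_toSubgraph_le hpT hw, fun h => hpx (h ▸ hw), p.dropUntil w hw, ?_, ?_⟩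
    · refine aux_toSubgraph_le _ ?_ ?_
      · intro a ha
        exact aux_verts_of_toSubgraph_le hpT (p.support_dropUntil_subset hw ha)
      · intro a b hab
        exact aux_adj_of_toSubgraph_le hpT (p.edges_dropUntil_subset hw hab)
    · intro hxd
      exact hpx (p.support_dropUntil_subset hw hxd)
  -- every vertex of S is joined to x by a walk with support inside S
  have hSwalk : ∀ v ∈ S, ∃ p : G.Walk v x, p.toSubgraph ≤ T.induce S := by
    intro v hvS
    obtain ⟨q, hqT⟩ := hwalk (hSsub hvS) hxT
    set p := q.bypass with hp
    have hpT : p.toSubgraph ≤ T := by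
      refine aux_toSubgraph_le _ ?_ ?_
      · intro a ha
        exact aux_verts_of_toSubgraph_le hqT (q.support_bypass_subset ha)
      · intro a b hab
        exact aux_adj_of_toSubgraph_le hqT (q.edges_bypass_subset hab)
    have hpPath : p.IsPath := q.bypass_isPath
    -- all support vertices of p are in S
    have hsupp : ∀ w ∈ p.support, w ∈ S := by
      intro w hw
      refine ⟨aux_verts_of_toSubgraph_le hpT hw, fun hwC => ?_⟩
      -- w ∈ C : get walk from w to y avoiding x; prefix of p from v to w avoids x
      obtain ⟨hwT, hwx, r, hrT, hrx⟩ := hwC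
      have hxtake : x ∉ (p.takeUntil w hw).support := by
        intro hxt
        have hspec := p.take_spec hw
        have hnodup : p.support.Nodup := hpPath.support_nodup
        rw [← hspec, SimpleGraph.Walk.support_append] at hnodup
        have hxdrop : x ∈ (p.dropUntil w hw).support.tail :=
          SimpleGraph.Walk.end_mem_tail_support_of_ne hwx _
        exact (List.disjoint_of_nodup_append hnodup) hxt hxdrop
      -- so v ∈ C via takeUntil then r
      have hvC : v ∈ C := by
        refine ⟨hSsub hvS, ?_, (p.takeUntil w hw).append r, ?_, ?_⟩
        · intro hvx
          exact hxtake (hvx ▸ (p.takeUntil w hw).start_mem_support)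
        · refine aux_toSubgraph_le _ ?_ ?_
          · intro a ha
            rw [SimpleGraph.Walk.mem_support_append_iff] at ha
            rcases ha with ha | ha
            · exact aux_verts_of_toSubgraph_le hpT (p.support_takeUntil_subset hw ha)
            · exact aux_verts_of_toSubgraph_le hrT ha
          · intro a b hab
            rw [SimpleGraph.Walk.edges_append, List.mem_append] at hab
            rcases hab with hab | hab
            · exact aux_adj_of_toSubgraph_le hpT (p.edges_takeUntil_subset hw hab)
            · exact aux_adj_of_toSubgraph_le hrT hab
        · intro hxap
          rw [SimpleGraph.Walk.mem_support_append_iff] at hxap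
          rcases hxap with h | h
          · exact hxtake h
          · exact hrx h
      exact hvS.2 hvC
    refine ⟨p, ?_⟩
    refine aux_toSubgraph_le _ hsupp ?_
    intro a b hab
    have haS : a ∈ S := hsupp a (SimpleGraph.Walk.fst_mem_support_of_mem_edges p hab)
    have hbS : b ∈ S := hsupp b (SimpleGraph.Walk.snd_mem_support_of_mem_edges p hab)
    exact ⟨haS, hbS, aux_adj_of_toSubgraph_le hpT hab⟩
  -- every vertex of C is joined to y by a walk with support inside C
  have hCwalk : ∀ v ∈ C, ∃ p : G.Walk v y, p.toSubgraph ≤ T.induce C := by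
    rintro v ⟨hvT, hvx, p, hpT, hpx⟩
    refine ⟨p, ?_⟩
    have hsupp : ∀ w ∈ p.support, w ∈ C := hCclosed p hpT hpx
    refine aux_toSubgraph_le _ hsupp ?_
    intro a b hab
    exact ⟨hsupp a (SimpleGraph.Walk.fst_mem_support_of_mem_edges p hab),
      hsupp b (SimpleGraph.Walk.snd_mem_support_of_mem_edges p hab),
      aux_adj_of_toSubgraph_le hpT hab⟩
  -- connectedness of both induced subgraphs
  have hSconn : (T.induce S).Connected := by
    rw [SimpleGraph.Subgraph.connected_iff_forall_exists_walk_subgraph]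
    refine ⟨⟨x, hxS⟩, ?_⟩
    intro u v hu hv
    obtain ⟨pu, hpu⟩ := hSwalk u hu
    obtain ⟨pv, hpv⟩ := hSwalk v hv
    refine ⟨pu.append pv.reverse, ?_⟩
    rw [SimpleGraph.Walk.toSubgraph_append, SimpleGraph.Walk.toSubgraph_reverse]
    exact sup_le hpu hpv
  have hCconn : (T.induce C).Connected := by
    rw [SimpleGraph.Subgraph.connected_iff_forall_exists_walk_subgraph]
    refine ⟨⟨y, hyC⟩, ?_⟩
    intro u v hu hv
    obtain ⟨pu, hpu⟩ := hCwalk u hu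
    obtain ⟨pv, hpv⟩ := hCwalk v hv
    refine ⟨pu.append pv.reverse, ?_⟩
    rw [SimpleGraph.Walk.toSubgraph_append, SimpleGraph.Walk.toSubgraph_reverse]
    exact sup_le hpu hpv
  have hSle : T.induce S ≤ T := aux_induce_le hSsub
  have hCle : T.induce C ≤ T := aux_induce_le hCsub
  have hStree : (T.induce S).coe.IsTree :=
    ⟨hSconn.coe, aux_acyclic_le hSle hT.IsAcyclic⟩
  have hCtree : (T.induce C).coe.IsTree :=
    ⟨hCconn.coe, aux_acyclic_le hCle hT.IsAcyclic⟩
  -- prize split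
  have hsplit : sgCost prz T = sgCost prz (T.induce C) + sgCost prz (T.induce S) := by
    have hU : T.verts = C ∪ S := (Set.union_diff_cancel hCsub).symm
    rw [sgCost, sgCost, sgCost, SimpleGraph.Subgraph.induce_verts,
      SimpleGraph.Subgraph.induce_verts, hU,
      finsum_mem_union Set.disjoint_sdiff_right (Set.toFinite C) (Set.toFinite S)]
  -- saddledness of induce S
  have hSsad : IsSaddled c B (T.induce S) := by
    refine ⟨x, hxS, hx, ?_⟩
    intro v hvS hvx
    by_contra hcv
    rw [not_le] at hcv
    have hvy : v ≠ y := fun h => hvS.2 (h ▸ hyC)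
    have h3 : c x + c y + c v ≤ sgCost c T := by
      have := aux_sum_le_sgCost c hc T {x, y, v} (by
        intro a ha
        simp only [Finset.mem_insert, Finset.mem_singleton] at ha
        rcases ha with rfl | rfl | rfl
        · exact hxT
        · exact hyT
        · exact hSsub hvS)
      rw [Finset.sum_insert (by
          simp only [Finset.mem_insert, Finset.mem_singleton]
          push_neg
          exact ⟨Ne.symm hyx, hvx.symm⟩),
        Finset.sum_insert (by simpa using hvy.symm), Finset.sum_singleton] at this
      linarith
    linarith
  -- flatness of induce C
  have hCflat : IsFlat c B (T.induce C) := by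
    intro v hvC
    have hvx : v ≠ x := hvC.2.1
    have h2 : c x + c v ≤ sgCost c T := by
      have := aux_sum_le_sgCost c hc T {x, v} (by
        intro a ha
        simp only [Finset.mem_insert, Finset.mem_singleton] at ha
        rcases ha with rfl | rfl
        · exact hxT
        · exact hCsub hvC)
      rw [Finset.sum_insert (by simpa using hvx.symm), Finset.sum_singleton] at this
      linarith
    linarith
  -- choose the half with larger prize
  by_cases hhalf : sgCost prz T / 2 ≤ sgCost prz (T.induce S)
  · exact ⟨T.induce S, hSle, hStree, Or.inr hSsad, hhalf⟩
  · refine ⟨T.induce C, hCle, hCtree, Or.inl hCflat, by linarith⟩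
end

section
/- Let B > 0 and let T' be a tree in G such that every vertex of T' has cost at most B/2 and c(T') ≤ 2B. Then there exists a tree T that is a connected subgraph of T' with c(T) ≤ B and π(T) ≥ π(T')/32. -/
open scoped Classical

namespace StmtAux

open SimpleGraph Walk Finset

/-! ### Pure finset/real lemmas -/

lemma extract {α : Type*} (r : ℝ) (hr : 0 < r) (κ : α → ℝ) (h0 : ∀ a, 0 ≤ κ a) :
    ∀ s : Finset α, (∀ a ∈ s, κ a ≤ r / 2) → r / 2 < ∑ a ∈ s, κ a →
    ∃ t ⊆ s, r / 2 < ∑ a ∈ t, κ a ∧ ∑ a ∈ t, κ a ≤ r := by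
  intro s
  induction s using Finset.strongInduction with
  | _ s ih =>
    intro hle hbig
    by_cases h : ∑ a ∈ s, κ a ≤ r
    · exact ⟨s, subset_rfl, hbig, h⟩
    · push_neg at h
      have hne : s.Nonempty := by
        refine Finset.nonempty_of_sum_ne_zero (f := κ) ?_
        intro h0'
        rw [h0'] at hbig; linarith
      obtain ⟨a, ha⟩ := hne
      have hsub : s.erase a ⊂ s := Finset.erase_ssubset ha
      have hsum : ∑ x ∈ s.erase a, κ x = (∑ x ∈ s, κ x) - κ a :=
        Finset.sum_erase_eq_sub ha
      have hbig' : r / 2 < ∑ x ∈ s.erase a, κ x := by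
        have := hle a ha; rw [hsum]; linarith
      obtain ⟨t, hts, h1, h2⟩ := ih _ hsub (fun x hx => hle x (Finset.mem_of_mem_erase hx)) hbig'
      exact ⟨t, hts.trans (Finset.erase_subset _ _), h1, h2⟩

lemma grouping {α : Type*} (B r : ℝ) (hB : 0 < B) (hrB : B / 2 ≤ r) (κ : α → ℝ)
    (h0 : ∀ a, 0 ≤ κ a) :
    ∀ s : Finset α, (∀ a ∈ s, κ a ≤ r) →
    ∃ L : List (Finset α), L ≠ [] ∧ (∀ a ∈ s, ∃ p ∈ L, a ∈ p) ∧
      (∀ p ∈ L, p ⊆ s ∧ ∑ a ∈ p, κ a ≤ r) ∧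
      ((L.length : ℝ) ≤ 1 + 4 * (∑ a ∈ s, κ a) / B) := by
  intro s
  induction s using Finset.strongInduction with
  | _ s ih =>
    intro hle
    have hr : 0 < r := lt_of_lt_of_le (by linarith) hrB
    by_cases hsr : ∑ a ∈ s, κ a ≤ r
    · refine ⟨[s], by simp, fun a ha => ⟨s, by simp, ha⟩, by simp [hsr], ?_⟩
      have : (0:ℝ) ≤ ∑ a ∈ s, κ a := Finset.sum_nonneg fun a _ => h0 a
      have h4 : (0:ℝ) ≤ 4 * (∑ a ∈ s, κ a) / B := by positivity
      simp only [List.length_singleton]; push_cast; linarith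
    · push_neg at hsr
      have hex : ∃ t ⊆ s, r / 2 < ∑ a ∈ t, κ a ∧ ∑ a ∈ t, κ a ≤ r := by
        by_cases hbig : ∃ a ∈ s, r / 2 < κ a
        · obtain ⟨a, ha, hab⟩ := hbig
          exact ⟨{a}, Finset.singleton_subset_iff.mpr ha, by simpa using hab,
            by simpa using hle a ha⟩
        · push_neg at hbig
          exact extract r hr κ h0 s hbig (by linarith)
      obtain ⟨t, hts, htl, htu⟩ := hex
      have htne : t.Nonempty := by
        refine Finset.nonempty_of_sum_ne_zero (f := κ) ?_
        intro h0'; rw [h0'] at htl; linarith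
      have hss : s \ t ⊂ s := by
        obtain ⟨a, ha⟩ := htne
        refine Finset.ssubset_iff_of_subset (Finset.sdiff_subset) |>.mpr ?_
        exact ⟨a, hts ha, by simp [ha]⟩
      obtain ⟨L', hL'ne, hcov, hparts, hlen⟩ :=
        ih _ hss (fun a ha => hle a (Finset.sdiff_subset ha))
      refine ⟨t :: L', by simp, ?_, ?_, ?_⟩
      · intro a ha
        by_cases hat : a ∈ t
        · exact ⟨t, by simp, hat⟩
        · obtain ⟨p, hp, hap⟩ := hcov a (Finset.mem_sdiff.mpr ⟨ha, hat⟩)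
          exact ⟨p, by simp [hp], hap⟩
      · intro p hp
        rcases List.mem_cons.mp hp with rfl | hp'
        · exact ⟨hts, htu⟩
        · exact ⟨(hparts p hp').1.trans (Finset.sdiff_subset), (hparts p hp').2⟩
      · have hsd : ∑ a ∈ s \ t, κ a = (∑ a ∈ s, κ a) - ∑ a ∈ t, κ a :=
          Finset.sum_sdiff_eq_sub hts
        simp only [List.length_cons]
        push_cast
        have : B / 4 ≤ ∑ a ∈ t, κ a := by linarith
        have key : (1:ℝ) ≤ 4 * (∑ a ∈ t, κ a) / B := by
          rw [le_div_iff₀ hB]; linarith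
        have e : 4 * ((∑ a ∈ s, κ a) - ∑ a ∈ t, κ a) / B
            = 4 * (∑ a ∈ s, κ a) / B - 4 * (∑ a ∈ t, κ a) / B := by ring
        rw [hsd] at hlen  -- no-op safe
        linarith [hlen, key]

lemma cover_sum {α : Type*} (f : α → ℝ) (h0 : ∀ a, 0 ≤ f a) :
    ∀ (L : List (Finset α)) (s : Finset α), (∀ a ∈ s, ∃ p ∈ L, a ∈ p) →
      ∑ a ∈ s, f a ≤ (L.map (fun p => ∑ a ∈ p, f a)).sum := by
  intro L
  induction L with
  | nil =>
    intro s hs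
    have : s = ∅ := Finset.eq_empty_of_forall_notMem fun a ha => by
      obtain ⟨p, hp, _⟩ := hs a ha; simp at hp
    simp [this]
  | cons p L ih =>
    intro s hs
    have h1 : ∑ a ∈ s ∩ p, f a + ∑ a ∈ s \ p, f a = ∑ a ∈ s, f a :=
      Finset.sum_inter_add_sum_sdiff s p f
    have h2 : ∑ a ∈ s ∩ p, f a ≤ ∑ a ∈ p, f a :=
      Finset.sum_le_sum_of_subset_of_nonneg (Finset.inter_subset_right)
        (fun a _ _ => h0 a)
    have h3 : ∑ a ∈ s \ p, f a ≤ (L.map (fun q => ∑ a ∈ q, f a)).sum := by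
      refine ih _ fun a ha => ?_
      obtain ⟨ha', hap⟩ := Finset.mem_sdiff.mp ha
      obtain ⟨q, hq, haq⟩ := hs a ha'
      rcases List.mem_cons.mp hq with rfl | hq'
      · exact absurd haq hap
      · exact ⟨q, hq', haq⟩
    simp only [List.map_cons, List.sum_cons]
    linarith

lemma list_lt {β : Type*} (g : β → ℝ) (b : ℝ) :
    ∀ L : List β, L ≠ [] → (∀ x ∈ L, g x < b) → (L.map g).sum < L.length * b := by
  intro L
  induction L with
  | nil => intro h; exact absurd rfl h
  | cons x L ih =>
    intro _ hlt
    rcases eq_or_ne L [] with rfl | hne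
    · simpa using hlt x (by simp)
    · have h1 := ih hne (fun y hy => hlt y (by simp [hy]))
      have h2 := hlt x (by simp)
      simp only [List.map_cons, List.sum_cons, List.length_cons]
      push_cast
      nlinarith [h1, h2]


/-! ### Unique paths in trees -/

variable {W : Type*} {H : SimpleGraph W}

noncomputable def tpath (hH : H.IsTree) (a b : W) : H.Walk a b :=
  (hH.existsUnique_path a b).choose

lemma tpath_isPath (hH : H.IsTree) (a b : W) : (tpath hH a b).IsPath :=
  (hH.existsUnique_path a b).choose_spec.1

lemma tpath_eq (hH : H.IsTree) {a b : W} (p : H.Walk a b) (hp : p.IsPath) :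
    p = tpath hH a b :=
  (hH.existsUnique_path a b).choose_spec.2 p hp

lemma tpath_self (hH : H.IsTree) (a : W) : tpath hH a a = Walk.nil :=
  (tpath_eq hH _ (Walk.IsPath.nil)).symm

lemma tpath_adj (hH : H.IsTree) {a b : W} (h : H.Adj a b) :
    tpath hH a b = Walk.cons h Walk.nil := by
  refine (tpath_eq hH _ ?_).symm
  refine Walk.IsPath.cons Walk.IsPath.nil ?_
  simp [h.ne]

lemma tpath_dropUntil (hH : H.IsTree) {a b z : W} (hz : z ∈ (tpath hH a b).support) :
    (tpath hH a b).dropUntil z hz = tpath hH z b :=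
  tpath_eq hH _ ((tpath_isPath hH a b).dropUntil hz)

lemma tpath_takeUntil (hH : H.IsTree) {a b z : W} (hz : z ∈ (tpath hH a b).support) :
    (tpath hH a b).takeUntil z hz = tpath hH a z :=
  tpath_eq hH _ ((tpath_isPath hH a b).takeUntil hz)

lemma exists_penult (hH : H.IsTree) {a b : W} (hab : a ≠ b) :
    ∃ y, H.Adj y b ∧ y ∈ (tpath hH a b).support := by
  set P := tpath hH a b with hP
  have hlen : 0 < P.length := by
    rcases Nat.eq_zero_or_pos P.length with h | h
    · exact absurd (Walk.eq_of_length_eq_zero h) hab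
    · exact h
  refine ⟨P.getVert (P.length - 1), ?_, ?_⟩
  · have := P.adj_getVert_succ (i := P.length - 1) (by omega)
    have he : P.length - 1 + 1 = P.length := by omega
    rw [he, Walk.getVert_length] at this
    exact this
  · exact Walk.mem_support_iff_exists_getVert.mpr ⟨P.length - 1, rfl, by omega⟩

lemma penult_eq (hH : H.IsTree) {a b u : W} (hu : H.Adj u b)
    (hm : u ∈ (tpath hH a b).support) :
    u = (tpath hH a b).getVert ((tpath hH a b).length - 1) := by
  have hdrop : (tpath hH a b).dropUntil u hm = Walk.cons hu Walk.nil := by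
    rw [tpath_dropUntil hH hm]; exact tpath_adj hH hu
  have hspec := (tpath hH a b).take_spec hm
  have hlen : ((tpath hH a b).takeUntil u hm).length + 1 = (tpath hH a b).length := by
    have := congrArg Walk.length hspec
    rw [Walk.length_append, hdrop] at this
    simpa using this
  have haux : ∀ {x y z : W} (p : H.Walk x y) (q : H.Walk y z),
      (p.append q).getVert p.length = y := by
    intro x y z p q
    rw [Walk.getVert_append]
    simp
  have hgv := haux ((tpath hH a b).takeUntil u hm) ((tpath hH a b).dropUntil u hm)
  rw [hspec] at hgv
  have he : ((tpath hH a b).takeUntil u hm).length = (tpath hH a b).length - 1 := by omega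
  rw [he] at hgv
  exact hgv.symm

lemma unique_nbr (hH : H.IsTree) {a b u₁ u₂ : W} (h₁ : H.Adj u₁ b) (h₂ : H.Adj u₂ b)
    (m₁ : u₁ ∈ (tpath hH a b).support) (m₂ : u₂ ∈ (tpath hH a b).support) : u₁ = u₂ := by
  rw [penult_eq hH h₁ m₁, penult_eq hH h₂ m₂]

lemma support_decomp (hH : H.IsTree) {a b u : W} (hu : H.Adj u b)
    (hm : u ∈ (tpath hH a b).support) :
    (tpath hH a b).support = ((tpath hH a b).takeUntil u hm).support ++ [b] := by
  have hdrop : (tpath hH a b).dropUntil u hm = Walk.cons hu Walk.nil := by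
    rw [tpath_dropUntil hH hm]; exact tpath_adj hH hu
  conv_lhs => rw [← (tpath hH a b).take_spec hm]
  rw [Walk.support_append, hdrop]
  simp

lemma end_not_mem_take (hH : H.IsTree) {a b u : W} (hu : H.Adj u b)
    (hm : u ∈ (tpath hH a b).support) :
    b ∉ (tpath hH a u).support := by
  have hd := support_decomp hH hu hm
  have hnd := (tpath_isPath hH a b).support_nodup
  rw [hd] at hnd
  have := (List.nodup_append'.mp hnd).2.2
  intro hb
  rw [← tpath_takeUntil hH hm] at hb
  exact this hb (by simp)

lemma not_both_sides (hH : H.IsTree) {x y w : W} (hxy : H.Adj x y)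
    (hy : y ∈ (tpath hH w x).support) (hx : x ∈ (tpath hH w y).support) : False :=
  end_not_mem_take hH hxy.symm hy hx

lemma side_total (hH : H.IsTree) {x y w : W} (hxy : H.Adj x y) :
    y ∈ (tpath hH w x).support ∨ x ∈ (tpath hH w y).support := by
  by_cases hy : y ∈ (tpath hH w x).support
  · exact Or.inl hy
  · right
    set P := tpath hH w x with hP
    have hR : (P.append (Walk.cons hxy Walk.nil)).IsPath := by
      rw [Walk.isPath_def, Walk.support_append]
      simp only [Walk.support_cons, Walk.support_nil, List.tail_cons]
      rw [List.nodup_append']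
      refine ⟨(tpath_isPath hH w x).support_nodup, List.nodup_singleton y, ?_⟩
      intro z hz hz'
      rw [List.mem_singleton] at hz'
      subst hz'
      exact hy hz
    have := tpath_eq hH _ hR
    rw [← this]
    rw [Walk.mem_support_append_iff]
    exact Or.inl (Walk.end_mem_support P)

lemma closure_v (hH : H.IsTree) {v u w z : W} (huv : H.Adj u v)
    (hu : u ∈ (tpath hH w v).support) (hz : z ∈ (tpath hH w v).support) (hzv : z ≠ v) :
    u ∈ (tpath hH z v).support := by
  obtain ⟨y, hyv, hy⟩ := exists_penult hH hzv
  have hy' : y ∈ (tpath hH w v).support := by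
    rw [← tpath_dropUntil hH hz] at hy
    exact Walk.support_dropUntil_subset _ _ hy
  have : y = u := unique_nbr hH hyv huv hy' hu
  rwa [← this]

lemma closure_u (hH : H.IsTree) {v u w z : W} (huv : H.Adj u v)
    (hu : u ∈ (tpath hH w v).support) (hz : z ∈ (tpath hH w u).support) :
    u ∈ (tpath hH z v).support := by
  have hvQ : v ∉ (tpath hH w u).support := end_not_mem_take hH huv hu
  have hvD : v ∉ (tpath hH z u).support := by
    intro hc
    rw [← tpath_dropUntil hH hz] at hc
    exact hvQ (Walk.support_dropUntil_subset _ _ hc)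
  have hR : ((tpath hH z u).append (Walk.cons huv Walk.nil)).IsPath := by
    rw [Walk.isPath_def, Walk.support_append]
    simp only [Walk.support_cons, Walk.support_nil, List.tail_cons]
    rw [List.nodup_append']
    refine ⟨(tpath_isPath hH z u).support_nodup, List.nodup_singleton v, ?_⟩
    intro x hx hx'
    rw [List.mem_singleton] at hx'
    subst hx'
    exact hvD hx
  rw [← tpath_eq hH _ hR, Walk.mem_support_append_iff]
  exact Or.inl (Walk.end_mem_support _)


/-! ### Centroid existence -/

lemma exists_centroid [Fintype W] (hH : H.IsTree) (cw : W → ℝ) (h0 : ∀ w, 0 ≤ cw w) :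
    ∃ v : W, ∀ u, H.Adj u v → ∀ A : Finset W,
      (∀ w ∈ A, u ∈ (tpath hH w v).support) →
      ∑ w ∈ A, cw w ≤ (∑ w, cw w) / 2 := by
  classical
  by_contra h
  push_neg at h
  choose f hadj A hAmem hbig using h
  letI : DecidableRel H.Adj := fun a b => Classical.dec _
  have hmem : ∀ v ∈ (Finset.univ : Finset W), s(f v, v) ∈ H.edgeFinset := by
    intro v _
    rw [SimpleGraph.mem_edgeFinset, SimpleGraph.mem_edgeSet]
    exact hadj v
  have hinj : Set.InjOn (fun v => s(f v, v)) (Finset.univ : Finset W) := by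
    intro v _ v' _ heq
    by_contra hne
    simp only [Sym2.eq_iff] at heq
    rcases heq with ⟨_, h2⟩ | ⟨h1, h2⟩
    · exact hne h2
    · -- f v = v' and v = f v'
      have hvv' : H.Adj v v' := by
        have := hadj v'
        rwa [← h2] at this
      have hA := hbig v
      have hB := hbig v'
      have hAm := hAmem v
      have hBm := hAmem v'
      rw [h1] at hAm
      rw [← h2] at hBm
      have hdisj : Disjoint (A v) (A v') := by
        rw [Finset.disjoint_left]
        intro w hwA hwB
        exact not_both_sides hH hvv' (hAm w hwA) (hBm w hwB)
      have hsum : ∑ w ∈ A v, cw w + ∑ w ∈ A v', cw w = ∑ w ∈ A v ∪ A v', cw w :=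
        (Finset.sum_union hdisj).symm
      have hle : ∑ w ∈ A v ∪ A v', cw w ≤ ∑ w, cw w :=
        Finset.sum_le_sum_of_subset_of_nonneg (Finset.subset_univ _) (fun a _ _ => h0 a)
      linarith
  have hcard := Finset.card_le_card_of_injOn (fun v => s(f v, v)) hmem hinj
  rw [Finset.card_univ] at hcard
  have := hH.card_edgeFinset
  omega

end StmtAux

namespace StmtAux2

open SimpleGraph Walk Finset StmtAux

variable {V : Type*} {G : SimpleGraph V}

/-! ### Cluster subgraphs -/

lemma mapped_toSubgraph_le (T' : G.Subgraph) {a b : ↥T'.verts} (p : T'.coe.Walk a b) :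
    (p.map T'.hom).toSubgraph ≤ T' := by
  induction p with
  | nil =>
    simp only [Walk.map_nil, Walk.toSubgraph]
    rw [SimpleGraph.singletonSubgraph_le_iff]
    exact Subtype.coe_prop _
  | cons h q ih =>
    simp only [Walk.map_cons, Walk.toSubgraph]
    exact sup_le (SimpleGraph.subgraphOfAdj_le_of_adj T' h) ih

lemma verts_finsetSup {ι : Type*} (f : ι → G.Subgraph) (S : Finset ι) :
    (S.sup f).verts = ⋃ i ∈ S, (f i).verts := by
  classical
  induction S using Finset.induction_on with
  | empty => simp
  | @insert a s ha ih => rw [Finset.sup_insert, Subgraph.verts_sup, ih]; simp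

noncomputable def clusSub (T' : G.Subgraph) (hH : T'.coe.IsTree) (b : ↥T'.verts)
    (S : Finset ↥T'.verts) : G.Subgraph :=
  S.sup (fun w => ((tpath hH w b).map T'.hom).toSubgraph)

lemma clusSub_le (T' : G.Subgraph) (hH : T'.coe.IsTree) (b : ↥T'.verts)
    (S : Finset ↥T'.verts) : clusSub T' hH b S ≤ T' :=
  Finset.sup_le fun w _ => mapped_toSubgraph_le T' _

lemma clusSub_connected (T' : G.Subgraph) (hH : T'.coe.IsTree) (b : ↥T'.verts)
    (S : Finset ↥T'.verts) (hb : b ∈ S) : (clusSub T' hH b S).Connected := by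
  classical
  set f : ↥T'.verts → G.Subgraph := fun w => ((tpath hH w b).map T'.hom).toSubgraph with hf
  have hbmem : ∀ w, (↑b : V) ∈ (f w).verts := by
    intro w
    have := Walk.end_mem_verts_toSubgraph ((tpath hH w b).map T'.hom)
    exact this
  have key : ∀ S' : Finset ↥T'.verts, (f b ⊔ S'.sup f).Connected := by
    intro S'
    induction S' using Finset.induction_on with
    | empty =>
      rw [Finset.sup_empty, sup_bot_eq]
      exact Walk.toSubgraph_connected _
    | @insert a s ha ih =>
      rw [Finset.sup_insert, sup_left_comm]
      refine Subgraph.connected_sup (Walk.toSubgraph_connected _).preconnected ih.preconnected ?_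
      refine ⟨(↑b : V), ?_⟩
      rw [Subgraph.verts_inf, Subgraph.verts_sup]
      exact ⟨hbmem a, Or.inl (hbmem b)⟩
  have : clusSub T' hH b S = f b ⊔ S.sup f := (sup_eq_right.mpr (Finset.le_sup hb)).symm
  rw [clusSub] at this ⊢
  rw [this]
  exact key S

lemma verts_clusSub (T' : G.Subgraph) (hH : T'.coe.IsTree) (b : ↥T'.verts)
    (S : Finset ↥T'.verts) (hb : b ∈ S)
    (hcl : ∀ w ∈ S, ∀ z, z ∈ (tpath hH w b).support → z ∈ S) :
    (clusSub T' hH b S).verts = Subtype.val '' (S : Set ↥T'.verts) := by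
  rw [clusSub, verts_finsetSup]
  ext x
  simp only [Set.mem_iUnion, Walk.mem_verts_toSubgraph, Walk.support_map, List.mem_map,
    Set.mem_image, Finset.mem_coe]
  constructor
  · rintro ⟨w, hw, z, hz, rfl⟩
    exact ⟨z, hcl w hw z hz, rfl⟩
  · rintro ⟨w, hwS, rfl⟩
    exact ⟨w, hwS, w, Walk.start_mem_support _, rfl⟩

lemma acyclic_of_le {A C : G.Subgraph} (h : A ≤ C) (hC : C.coe.IsAcyclic) :
    A.coe.IsAcyclic := by
  intro v p hp
  exact hC _ (hp.map (Subgraph.inclusion.injective h))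

end StmtAux2


namespace StmtAux2

open SimpleGraph Walk Finset StmtAux

variable {V : Type*} {G : SimpleGraph V}

lemma sgCost_eq_sum {T' : G.Subgraph} {X : G.Subgraph} {S : Finset ↥T'.verts} (f : V → ℝ)
    (h : X.verts = Subtype.val '' (S : Set ↥T'.verts)) :
    sgCost f X = ∑ w ∈ S, f ↑w := by
  rw [sgCost, h, ← Finset.coe_image, finsum_mem_coe_finset]
  exact Finset.sum_image (fun a _ b _ hab => Subtype.val_injective hab)

lemma verts_eq_image_univ (T' : G.Subgraph) [Fintype ↥T'.verts] :
    T'.verts = Subtype.val '' ((Finset.univ : Finset ↥T'.verts) : Set ↥T'.verts) := by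
  rw [Finset.coe_univ, Set.image_univ, Subtype.range_coe]

end StmtAux2

open StmtAux StmtAux2 SimpleGraph Finset

theorem stmt4 {V : Type*} [Fintype V] {G : SimpleGraph V}
    (c prz : V → ℝ) (hc : ∀ v, 0 ≤ c v) (hprz : ∀ v, 0 ≤ prz v)
    (B : ℝ) (hB : 0 < B)
    (T' : G.Subgraph) (hT' : T'.coe.IsTree)
    (hvert : ∀ v ∈ T'.verts, c v ≤ B / 2)
    (hcost : sgCost c T' ≤ 2 * B) :
    ∃ T : G.Subgraph, T ≤ T' ∧ T.coe.IsTree ∧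
      sgCost c T ≤ B ∧ sgCost prz T' / 32 ≤ sgCost prz T := by
  classical
  set cw : ↥T'.verts → ℝ := fun w => c ↑w with hcwdef
  set pw : ↥T'.verts → ℝ := fun w => prz ↑w with hpwdef
  set ctot : ℝ := ∑ w : ↥T'.verts, cw w with hctotdef
  have hctotT : sgCost c T' = ctot := sgCost_eq_sum c (verts_eq_image_univ T')
  have hctot2B : ctot ≤ 2 * B := by rw [← hctotT]; exact hcost
  have hctot0 : 0 ≤ ctot := Finset.sum_nonneg fun w _ => hc _
  obtain ⟨v, hv⟩ := exists_centroid hT' cw (fun w => hc ↑w)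
  set KF : ↥T'.verts → Finset ↥T'.verts :=
    fun u => Finset.univ.filter (fun w => u ∈ (tpath hT' w v).support) with hKFdef
  set κ : ↥T'.verts → ℝ := fun u => ∑ w ∈ KF u, cw w with hκdef
  have hκ0 : ∀ u, 0 ≤ κ u := fun u => Finset.sum_nonneg fun w _ => hc _
  set N : Finset ↥T'.verts := Finset.univ.filter (fun u => T'.coe.Adj u v) with hNdef
  have hNadj : ∀ u ∈ N, T'.coe.Adj u v := by
    intro u hu; rw [hNdef, Finset.mem_filter] at hu; exact hu.2
  have hKFmem : ∀ u w, w ∈ KF u ↔ u ∈ (tpath hT' w v).support := by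
    intro u w; rw [hKFdef]; simp
  have hκcent : ∀ u ∈ N, κ u ≤ ctot / 2 := by
    intro u hu
    exact hv u (hNadj u hu) (KF u) (fun w hw => (hKFmem u w).mp hw)
  have hdisj : ∀ u₁ ∈ N, ∀ u₂ ∈ N, u₁ ≠ u₂ → Disjoint (KF u₁) (KF u₂) := by
    intro u₁ h1 u₂ h2 hne
    rw [Finset.disjoint_left]
    intro w hw1 hw2
    rw [hKFmem] at hw1 hw2
    exact hne (unique_nbr hT' (hNadj u₁ h1) (hNadj u₂ h2) hw1 hw2)
  have hvKF : ∀ u ∈ N, v ∉ KF u := by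
    intro u hu hvm
    rw [hKFmem, tpath_self] at hvm
    rw [Walk.support_nil, List.mem_singleton] at hvm
    exact (hNadj u hu).ne (hvm ▸ rfl)
  have hcover : ∀ w : ↥T'.verts, w ≠ v → ∃ u ∈ N, w ∈ KF u := by
    intro w hw
    obtain ⟨y, hyv, hy⟩ := exists_penult hT' hw
    refine ⟨y, ?_, ?_⟩
    · rw [hNdef, Finset.mem_filter]; exact ⟨Finset.mem_univ _, hyv⟩
    · rw [hKFmem]; exact hy
  have hκsum : ∀ M : Finset ↥T'.verts, M ⊆ N → ∑ u ∈ M, κ u ≤ ctot := by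
    intro M hM
    have hpd : (↑M : Set ↥T'.verts).PairwiseDisjoint KF := by
      intro a ha b hb hab
      exact hdisj a (hM ha) b (hM hb) hab
    have heq : ∑ u ∈ M, κ u = ∑ w ∈ M.biUnion KF, cw w := (Finset.sum_biUnion hpd).symm
    rw [heq]
    exact Finset.sum_le_sum_of_subset_of_nonneg (Finset.subset_univ _) (fun w _ _ => hc _)
  have hcv2 : cw v ≤ B / 2 := hvert ↑v v.2
  have hcv0 : 0 ≤ cw v := hc _
  set r : ℝ := B - cw v with hrdef
  have hrB : B / 2 ≤ r := by rw [hrdef]; linarith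
  set smalls : Finset ↥T'.verts := N.filter (fun u => κ u ≤ r) with hsmallsdef
  set bigs : Finset ↥T'.verts := N.filter (fun u => ¬ κ u ≤ r) with hbigsdef
  obtain ⟨L, hLne, hLcov, hLparts, hLlen⟩ :=
    grouping B r hB hrB κ hκ0 smalls (fun a ha => (Finset.mem_filter.mp ha).2)
  have hsmallsum : ∑ u ∈ smalls, κ u ≤ ctot := hκsum smalls (Finset.filter_subset _ _)
  have hsmall0 : 0 ≤ ∑ u ∈ smalls, κ u := Finset.sum_nonneg fun u _ => hκ0 u
  have hLlen9 : (L.length : ℝ) ≤ 9 := by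
    have h4 : 4 * (∑ u ∈ smalls, κ u) / B ≤ 8 := by
      rw [div_le_iff₀ hB]; linarith
    linarith
  have hbigcard : (bigs.card : ℝ) ≤ 4 := by
    have hlow : ∀ u ∈ bigs, B / 2 ≤ κ u := by
      intro u hu
      have := (Finset.mem_filter.mp hu).2
      push_neg at this
      linarith
    have hns := Finset.card_nsmul_le_sum bigs κ (B / 2) hlow
    rw [nsmul_eq_mul] at hns
    have hbs : ∑ u ∈ bigs, κ u ≤ ctot := hκsum bigs (Finset.filter_subset _ _)
    have h5 : (bigs.card : ℝ) * (B / 2) ≤ 2 * B := by linarith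
    have h6 : (bigs.card : ℝ) ≤ 2 * B / (B / 2) := (le_div_iff₀ (half_pos hB)).mpr h5
    have h7 : 2 * B / (B / 2) = 4 := by field_simp; ring
    linarith [h6, h7.le, h7.ge]
  set mkS : Finset ↥T'.verts → Finset ↥T'.verts := fun p => insert v (p.biUnion KF) with hmkSdef
  set PL : List (Finset ↥T'.verts × ↥T'.verts) :=
    (L.map (fun p => (mkS p, v))) ++ (bigs.toList.map (fun u => (KF u, u))) with hPLdef
  have hPLlen : (PL.length : ℝ) ≤ 13 := by
    rw [hPLdef]
    rw [List.length_append, List.length_map, List.length_map, Finset.length_toList]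
    push_cast
    linarith
  have hPLne : PL ≠ [] := by
    rw [hPLdef]
    intro hcon
    rcases List.append_eq_nil_iff.mp hcon with ⟨h1, _⟩
    exact hLne (List.map_eq_nil_iff.mp h1)
  -- properties of each pair
  have hprop : ∀ q ∈ PL, q.2 ∈ q.1 ∧
      (∀ w ∈ q.1, ∀ z, z ∈ (tpath hT' w q.2).support → z ∈ q.1) ∧
      (∑ w ∈ q.1, cw w ≤ B) := by
    intro q hq
    rw [hPLdef, List.mem_append] at hq
    rcases hq with hq | hq
    · obtain ⟨p, hpL, rfl⟩ := List.mem_map.mp hq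
      obtain ⟨hpsub, hpsum⟩ := hLparts p hpL
      have hpN : p ⊆ N := hpsub.trans (Finset.filter_subset _ _)
      constructor
      · exact Finset.mem_insert_self _ _
      constructor
      · -- closure
        intro w hw z hz
        rcases Finset.mem_insert.mp hw with rfl | hw'
        · -- w = v : support of tpath v v = [v]
          rw [tpath_self, Walk.support_nil, List.mem_singleton] at hz
          subst hz
          exact Finset.mem_insert_self _ _
        · obtain ⟨u, hup, hwKF⟩ := Finset.mem_biUnion.mp hw'
          by_cases hzv : z = v
          · subst hzv; exact Finset.mem_insert_self _ _
          · refine Finset.mem_insert_of_mem (Finset.mem_biUnion.mpr ⟨u, hup, ?_⟩)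
            rw [hKFmem] at hwKF ⊢
            exact closure_v hT' (hNadj u (hpN hup)) hwKF hz hzv
      · -- cost
        have hvnot : v ∉ p.biUnion KF := by
          intro hcon
          obtain ⟨u, hup, hvKFu⟩ := Finset.mem_biUnion.mp hcon
          exact hvKF u (hpN hup) hvKFu
        have hpd : (↑p : Set ↥T'.verts).PairwiseDisjoint KF := by
          intro a ha b hb hab
          exact hdisj a (hpN ha) b (hpN hb) hab
        rw [hmkSdef]
        rw [Finset.sum_insert hvnot, Finset.sum_biUnion hpd]
        have : ∑ u ∈ p, ∑ w ∈ KF u, cw w = ∑ u ∈ p, κ u := by rfl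
        rw [this]
        rw [hrdef] at hpsum
        linarith
    · obtain ⟨u, hub, rfl⟩ := List.mem_map.mp hq
      rw [Finset.mem_toList] at hub
      have huN : u ∈ N := Finset.filter_subset _ _ hub
      have huadj : T'.coe.Adj u v := hNadj u huN
      constructor
      · rw [hKFmem, tpath_adj hT' huadj]; simp
      constructor
      · intro w hw z hz
        rw [hKFmem] at hw ⊢
        exact closure_u hT' huadj hw hz
      · have := hκcent u huN
        rw [hκdef] at this
        linarith
  -- cover of all vertices
  have hcovall : ∀ w : ↥T'.verts, ∃ q ∈ PL, w ∈ q.1 := by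
    intro w
    by_cases hwv : w = v
    · subst hwv
      obtain ⟨p, hpL⟩ := List.exists_mem_of_ne_nil L hLne
      refine ⟨(mkS p, w), ?_, Finset.mem_insert_self _ _⟩
      rw [hPLdef, List.mem_append]
      exact Or.inl (List.mem_map.mpr ⟨p, hpL, rfl⟩)
    · obtain ⟨u, huN, hwu⟩ := hcover w hwv
      by_cases hus : κ u ≤ r
      · have husm : u ∈ smalls := Finset.mem_filter.mpr ⟨huN, hus⟩
        obtain ⟨p, hpL, hup⟩ := hLcov u husm
        refine ⟨(mkS p, v), ?_, ?_⟩
        · rw [hPLdef, List.mem_append]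
          exact Or.inl (List.mem_map.mpr ⟨p, hpL, rfl⟩)
        · exact Finset.mem_insert_of_mem (Finset.mem_biUnion.mpr ⟨u, hup, hwu⟩)
      · have hubig : u ∈ bigs := Finset.mem_filter.mpr ⟨huN, hus⟩
        refine ⟨(KF u, u), ?_, hwu⟩
        rw [hPLdef, List.mem_append]
        exact Or.inr (List.mem_map.mpr ⟨u, Finset.mem_toList.mpr hubig, rfl⟩)
  -- prize accounting
  set ptot : ℝ := ∑ w : ↥T'.verts, pw w with hptotdef
  have hptotT : sgCost prz T' = ptot := sgCost_eq_sum prz (verts_eq_image_univ T')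
  have hptot0 : 0 ≤ ptot := Finset.sum_nonneg fun w _ => hprz _
  have hcsum : ptot ≤ (PL.map (fun q => ∑ w ∈ q.1, pw w)).sum := by
    have hcv := cover_sum pw (fun w => hprz _) (PL.map Prod.fst) Finset.univ
      (by
        intro a _
        obtain ⟨q, hq, haq⟩ := hcovall a
        exact ⟨q.1, List.mem_map.mpr ⟨q, hq, rfl⟩, haq⟩)
    rw [List.map_map] at hcv
    exact hcv
  obtain ⟨q, hqPL, hqprz⟩ : ∃ q ∈ PL, ptot / 32 ≤ ∑ w ∈ q.1, pw w := by
    by_contra hno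
    push_neg at hno
    have hlt := list_lt (fun q => ∑ w ∈ q.1, pw w) (ptot / 32) PL hPLne hno
    have hlen32 : (PL.length : ℝ) ≤ 32 := by linarith
    have hx : (PL.length : ℝ) * (ptot / 32) ≤ 32 * (ptot / 32) := by
      have : 0 ≤ ptot / 32 := by positivity
      nlinarith
    have : 32 * (ptot / 32) = ptot := by ring
    linarith
  obtain ⟨hqb, hqcl, hqc⟩ := hprop q hqPL
  have hverts := verts_clusSub T' hT' q.2 q.1 hqb hqcl
  have hle := clusSub_le T' hT' q.2 q.1
  refine ⟨clusSub T' hT' q.2 q.1, hle, ?_, ?_, ?_⟩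
  · constructor
    · exact Subgraph.connected_iff'.mp (clusSub_connected T' hT' q.2 q.1 hqb)
    · exact acyclic_of_le hle hT'.2
  · rw [sgCost_eq_sum c hverts]
    exact hqc
  · rw [sgCost_eq_sum prz hverts, hptotT]
    exact hqprz
end

section
/- Let (y_i(S))_{i∈[h], S∈𝒮_i} be nonnegative reals and set y(S) = ∑_{i : S∈𝒮_i} y_i(S) for S ∈ 𝒮. Suppose the dual feasibility constraints hold: (C1) for every v ∈ V, ∑_{S ∈ 𝒮 : v ∈ δ(S)} y(S) ≤ c(v), and (C2) for every S ∈ 𝒮, ∑_{S' ⊆ S} ∑_{i : S ∈ 𝒮_i and S' ∈ 𝒮_i} y_i(S') ≤ π(S). Then for every X ⊆ V, ∑_{S ∈ 𝒮} y(S) ≤ pcsf(X). -/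
open scoped Classical

/-- `δ(S)`: the set of vertices not in `S` having a neighbor in `S`. -/
def cutδ {V : Type*} (G : SimpleGraph V) (S : Set V) : Set V :=
  {v | v ∉ S ∧ ∃ u ∈ S, G.Adj v u}

/-- `S` separates demand `i`: it contains exactly one of `s i`, `t i`. -/
def Separates {V : Type*} {h : ℕ} (s t : Fin h → V) (i : Fin h) (S : Set V) : Prop :=
  Xor' (s i ∈ S) (t i ∈ S)

/-- `X` satisfies demand `i`: `s i` and `t i` lie in the same connected component of
the induced subgraph `G[X]`. -/
def Satisfies {V : Type*} (G : SimpleGraph V) {h : ℕ} (s t : Fin h → V)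
    (X : Set V) (i : Fin h) : Prop :=
  ∃ (hs : s i ∈ X) (ht : t i ∈ X), (G.induce X).Reachable ⟨s i, hs⟩ ⟨t i, ht⟩

/-- The prize-collecting Steiner forest objective:
cost of `X` plus the penalties of demands not satisfied by `X`. -/
noncomputable def pcsf {V : Type*} (G : SimpleGraph V) {h : ℕ} (s t : Fin h → V)
    (c : V → ℝ) (pen : Fin h → ℝ) (X : Set V) : ℝ :=
  (∑ᶠ v ∈ X, c v) + ∑ᶠ i ∈ {i : Fin h | ¬ Satisfies G s t X i}, pen i

lemma exists_cross {V : Type*} {G : SimpleGraph V} {X S : Set V} :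
    ∀ {a b : X}, (G.induce X).Walk a b → (a : V) ∈ S → (b : V) ∉ S →
      ∃ w, w ∈ X ∧ w ∈ cutδ G S := by
  intro a b p
  induction p with
  | nil => intro ha hb; exact absurd ha hb
  | @cons u v w huv _ ih =>
    intro ha hb
    by_cases hv : (v : V) ∈ S
    · exact ih hv hb
    · exact ⟨v, v.2, hv, u, ha, ((by simpa using huv : G.Adj (u:V) (v:V))).symm⟩

def Rcomp {V : Type*} (G : SimpleGraph V) (X : Set V) (w : V) : Set V :=
  {v | v = w ∨ ∃ (hv : v ∈ X) (hw : w ∈ X), (G.induce X).Reachable ⟨v, hv⟩ ⟨w, hw⟩}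

lemma Rcomp_self {V : Type*} (G : SimpleGraph V) (X : Set V) (w : V) : w ∈ Rcomp G X w :=
  Or.inl rfl

lemma Rcomp_class {V : Type*} (G : SimpleGraph V) (X : Set V) {u w : V}
    (hu : u ∈ Rcomp G X w) : Rcomp G X u = Rcomp G X w := by
  rcases hu with rfl | ⟨huX, hwX, hr⟩
  · rfl
  · ext v
    constructor
    · rintro (rfl | ⟨hvX, _, hr2⟩)
      · exact Or.inr ⟨huX, hwX, hr⟩
      · exact Or.inr ⟨hvX, hwX, hr2.trans hr⟩
    · rintro (rfl | ⟨hvX, _, hr2⟩)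
      · exact Or.inr ⟨hwX, huX, hr.symm⟩
      · exact Or.inr ⟨hvX, huX, hr2.trans hr.symm⟩

lemma finsum_mem_toFinset_sum {α M : Type*} [AddCommMonoid M] (s : Set α) (f : α → M)
    [Fintype s] : ∑ᶠ x ∈ s, f x = ∑ x ∈ s.toFinset, f x := by
  rw [← finsum_mem_coe_finset, Set.coe_toFinset]

theorem stmt6 {V : Type*} [Fintype V] (G : SimpleGraph V)
    (h : ℕ) (hh : 1 ≤ h) (s t : Fin h → V)
    (hdist : Function.Injective (Sum.elim s t))
    (c : V → ℝ) (hc : ∀ v, 0 ≤ c v) (hcs : ∀ i, c (s i) = 0) (hct : ∀ i, c (t i) = 0)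
    (pen : Fin h → ℝ) (hpen : ∀ i, 0 ≤ pen i)
    (yi : Fin h → Set V → ℝ) (hyi0 : ∀ i S, 0 ≤ yi i S)
    (hyisupp : ∀ (i : Fin h) (S : Set V), ¬ Separates s t i S → yi i S = 0)
    (y : Set V → ℝ) (hy : ∀ S, y S = ∑ i, yi i S)
    (C1 : ∀ v : V,
      (∑ᶠ S ∈ {S : Set V | (∃ i, Separates s t i S) ∧ v ∈ cutδ G S}, y S) ≤ c v)
    (C2 : ∀ S : Set V, (∃ i, Separates s t i S) →
      (∑ᶠ S' ∈ {S' : Set V | S' ⊆ S},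
          ∑ᶠ i ∈ {i : Fin h | Separates s t i S ∧ Separates s t i S'}, yi i S')
        ≤ (1 / 2) * ∑ᶠ i ∈ {i : Fin h | Separates s t i S}, pen i)
    (X : Set V) :
    (∑ᶠ S ∈ {S : Set V | ∃ i, Separates s t i S}, y S) ≤ pcsf G s t c pen X := by
  classical
  -- basic facts
  have hyge : ∀ S, 0 ≤ y S := fun S => by
    rw [hy]; exact Finset.sum_nonneg fun i _ => hyi0 i S
  have hsepne : ∀ (i : Fin h) (S : Set V), yi i S ≠ 0 → Separates s t i S := by
    intro i S hne; by_contra hcon; exact hne (hyisupp i S hcon)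
  have hsne : ∀ i, s i ≠ t i := by
    intro i he
    have : (Sum.inl i : Fin h ⊕ Fin h) = Sum.inr i := hdist (by simpa using he)
    simp at this
  have hcrossSat : ∀ (i : Fin h) (S : Set V), Satisfies G s t X i → Separates s t i S →
      ∃ w, w ∈ X ∧ w ∈ cutδ G S := by
    intro i S hsat hsep
    obtain ⟨hs', ht', hr⟩ := hsat
    rcases hsep with ⟨h1, h2⟩ | ⟨h1, h2⟩
    · obtain ⟨p⟩ := hr; exact exists_cross p h1 h2
    · obtain ⟨p⟩ := hr.symm; exact exists_cross p h1 h2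
  have hclosed : ∀ S : Set V, (¬ ∃ w, w ∈ X ∧ w ∈ cutδ G S) →
      ∀ (a b : X), (G.induce X).Reachable a b → (a : V) ∈ S → (b : V) ∈ S := by
    intro S hS a b hr ha
    by_contra hb
    obtain ⟨p⟩ := hr
    exact hS (exists_cross p ha hb)
  have hsub : ∀ (S : Set V) (w : V), (¬ ∃ w, w ∈ X ∧ w ∈ cutδ G S) → w ∉ S →
      S ⊆ (Rcomp G X w)ᶜ := by
    intro S w hS hw v hv hvR
    rcases hvR with rfl | ⟨hvX, hwX, hr⟩
    · exact hw hv
    · exact hw (hclosed S hS ⟨v, hvX⟩ ⟨w, hwX⟩ hr hv)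
  have hnotR : ∀ i : Fin h, ¬ Satisfies G s t X i → s i ∉ Rcomp G X (t i) := by
    intro i hi hmem
    rcases hmem with he | ⟨hv, hw, hr⟩
    · exact hsne i he
    · exact hi ⟨hv, hw, hr⟩
  have hnotR' : ∀ i : Fin h, ¬ Satisfies G s t X i → t i ∉ Rcomp G X (s i) := by
    intro i hi hmem
    rcases hmem with he | ⟨hv, hw, hr⟩
    · exact hsne i he.symm
    · exact hi ⟨hw, hv, hr.symm⟩
  have hFt : ∀ i : Fin h, ¬ Satisfies G s t X i → Separates s t i (Rcomp G X (t i))ᶜ :=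
    fun i hi => Or.inl ⟨hnotR i hi, fun hmm => hmm (Rcomp_self G X (t i))⟩
  have hFs : ∀ i : Fin h, ¬ Satisfies G s t X i → Separates s t i (Rcomp G X (s i))ᶜ :=
    fun i hi => Or.inr ⟨hnotR' i hi, fun hmm => hmm (Rcomp_self G X (s i))⟩
  have hSatR : ∀ (j : Fin h) (w : V), Satisfies G s t X j →
      (s j ∈ Rcomp G X w ↔ t j ∈ Rcomp G X w) := by
    intro j w hsat
    obtain ⟨hsj, htj, hr⟩ := hsat
    constructor
    · rintro (rfl | ⟨_, hwX, hr2⟩)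
      · exact Or.inr ⟨htj, hsj, hr.symm⟩
      · exact Or.inr ⟨htj, hwX, hr.symm.trans hr2⟩
    · rintro (rfl | ⟨_, hwX, hr2⟩)
      · exact Or.inr ⟨hsj, htj, hr⟩
      · exact Or.inr ⟨hsj, hwX, hr.trans hr2⟩
  have hSepCompl : ∀ (j : Fin h) (w : V), Separates s t j (Rcomp G X w)ᶜ →
      ¬ Satisfies G s t X j ∧
        (Rcomp G X w = Rcomp G X (s j) ∨ Rcomp G X w = Rcomp G X (t j)) := by
    intro j w hsep
    constructor
    · intro hsat
      have hiff := hSatR j w hsat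
      rcases hsep with ⟨h1, h2⟩ | ⟨h1, h2⟩
      · exact h1 (hiff.mpr (not_not.mp h2))
      · exact h1 (hiff.mp (not_not.mp h2))
    · rcases hsep with ⟨h1, h2⟩ | ⟨h1, h2⟩
      · exact Or.inr (Rcomp_class G X (not_not.mp h2)).symm
      · exact Or.inl (Rcomp_class G X (not_not.mp h2)).symm
  -- Finset versions of the sets involved
  set U : Finset (Fin h) := Finset.univ.filter (fun i => ¬ Satisfies G s t X i) with hUdef
  set 𝒮 : Finset (Set V) :=
    Finset.univ.filter (fun S : Set V => ∃ i, Separates s t i S) with h𝒮def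
  -- rewrite the goal as finset sums
  unfold pcsf
  rw [finsum_mem_toFinset_sum, finsum_mem_toFinset_sum, finsum_mem_toFinset_sum,
    Set.toFinset_setOf, Set.toFinset_setOf]
  rw [← Finset.sum_filter_add_sum_filter_not
    (Finset.univ.filter (fun S : Set V => ∃ i, Separates s t i S))
    (fun S => ∃ w, w ∈ X ∧ w ∈ cutδ G S) y]
  have hA : ∑ S ∈ (Finset.univ.filter (fun S : Set V => ∃ i, Separates s t i S)).filter
      (fun S => ∃ w, w ∈ X ∧ w ∈ cutδ G S), y S ≤ ∑ v ∈ X.toFinset, c v := by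
    set 𝒜 := (Finset.univ.filter (fun S : Set V => ∃ i, Separates s t i S)).filter
      (fun S => ∃ w, w ∈ X ∧ w ∈ cutδ G S) with h𝒜def
    set f : Set V → V := fun S =>
      if hS : ∃ w, w ∈ X ∧ w ∈ cutδ G S then hS.choose else s ⟨0, hh⟩ with hfdef
    have hf : ∀ S, (∃ w, w ∈ X ∧ w ∈ cutδ G S) → f S ∈ X ∧ f S ∈ cutδ G S := by
      intro S hS
      rw [hfdef]
      simp only [dif_pos hS]
      exact hS.choose_spec
    have hmaps : ∀ S ∈ 𝒜, f S ∈ X.toFinset := by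
      intro S hS
      rw [Set.mem_toFinset]
      exact (hf S (Finset.mem_filter.mp hS).2).1
    rw [← Finset.sum_fiberwise_of_maps_to hmaps y]
    apply Finset.sum_le_sum
    intro v hv
    have hsub2 : 𝒜.filter (fun S => f S = v) ⊆
        {S : Set V | (∃ i, Separates s t i S) ∧ v ∈ cutδ G S}.toFinset := by
      intro S hS
      rw [Set.mem_toFinset]
      obtain ⟨hS1, hfv⟩ := Finset.mem_filter.mp hS
      obtain ⟨hS2, hS3⟩ := Finset.mem_filter.mp hS1
      exact ⟨(Finset.mem_filter.mp hS2).2, hfv ▸ (hf S hS3).2⟩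
    calc ∑ S ∈ 𝒜.filter (fun S => f S = v), y S
        ≤ ∑ S ∈ {S : Set V | (∃ i, Separates s t i S) ∧ v ∈ cutδ G S}.toFinset, y S :=
          Finset.sum_le_sum_of_subset_of_nonneg hsub2 (fun S _ _ => hyge S)
      _ ≤ c v := by rw [← finsum_mem_toFinset_sum]; exact C1 v
  have hB : ∑ S ∈ (Finset.univ.filter (fun S : Set V => ∃ i, Separates s t i S)).filter
      (fun S => ¬ ∃ w, w ∈ X ∧ w ∈ cutδ G S), y S ≤
      ∑ i ∈ Finset.univ.filter (fun i => ¬ Satisfies G s t X i), pen i := by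
    set 𝒮B := (Finset.univ.filter (fun S : Set V => ∃ i, Separates s t i S)).filter
      (fun S => ¬ ∃ w, w ∈ X ∧ w ∈ cutδ G S) with h𝒮Bdef
    set P : Finset (Set V × Fin h) :=
      (𝒮B ×ˢ Finset.univ).filter (fun p => yi p.2 p.1 ≠ 0) with hPdef
    set q : Set V × Fin h → Set V := fun p =>
      if s p.2 ∈ p.1 then Rcomp G X (t p.2) else Rcomp G X (s p.2) with hqdef
    set 𝒬 : Finset (Set V) :=
      (Finset.univ.filter (fun i => ¬ Satisfies G s t X i)).biUnion
        (fun i => {Rcomp G X (s i), Rcomp G X (t i)}) with h𝒬def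
    have hPfact : ∀ p ∈ P, Separates s t p.2 p.1 ∧ ¬ Satisfies G s t X p.2 ∧
        p.1 ⊆ (q p)ᶜ ∧ Separates s t p.2 (q p)ᶜ ∧
        (q p = Rcomp G X (s p.2) ∨ q p = Rcomp G X (t p.2)) := by
      rintro ⟨S, i⟩ hp
      obtain ⟨hp1, hne⟩ := Finset.mem_filter.mp hp
      obtain ⟨hSB, -⟩ := Finset.mem_product.mp hp1
      obtain ⟨-, hnc⟩ := Finset.mem_filter.mp hSB
      have hsep : Separates s t i S := hsepne i S hne
      have hunsat : ¬ Satisfies G s t X i := fun hsat => hnc (hcrossSat i S hsat hsep)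
      by_cases hsi : s i ∈ S
      · have hq : q (S, i) = Rcomp G X (t i) := by rw [hqdef]; simp [hsi]
        have htiS : t i ∉ S := by
          rcases hsep with ⟨-, h2⟩ | ⟨-, h2⟩
          · exact h2
          · exact absurd hsi h2
        exact ⟨hsep, hunsat, hq ▸ hsub S (t i) hnc htiS, hq ▸ hFt i hunsat, Or.inr hq⟩
      · have hq : q (S, i) = Rcomp G X (s i) := by rw [hqdef]; simp [hsi]
        exact ⟨hsep, hunsat, hq ▸ hsub S (s i) hnc hsi, hq ▸ hFs i hunsat, Or.inl hq⟩
    have hmapsQ : ∀ p ∈ P, q p ∈ 𝒬 := by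
      intro p hp
      obtain ⟨-, hunsat, -, -, hqor⟩ := hPfact p hp
      refine Finset.mem_biUnion.mpr ⟨p.2, Finset.mem_filter.mpr ⟨Finset.mem_univ _, hunsat⟩, ?_⟩
      rcases hqor with hq | hq
      · rw [hq]; exact Finset.mem_insert_self _ _
      · rw [hq]; exact Finset.mem_insert_of_mem (Finset.mem_singleton_self _)
    have e1 : ∑ S ∈ 𝒮B, y S = ∑ p ∈ 𝒮B ×ˢ Finset.univ, yi p.2 p.1 := by
      rw [Finset.sum_product]
      exact Finset.sum_congr rfl fun S _ => hy S
    have e2 : ∑ p ∈ 𝒮B ×ˢ Finset.univ, yi p.2 p.1 = ∑ p ∈ P, yi p.2 p.1 := by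
      refine (Finset.sum_subset (Finset.filter_subset _ _) ?_).symm
      intro p hp hnp
      by_contra hne
      exact hnp (Finset.mem_filter.mpr ⟨hp, hne⟩)
    have e3 : ∑ p ∈ P, yi p.2 p.1 =
        ∑ Z ∈ 𝒬, ∑ p ∈ P.filter (fun p => q p = Z), yi p.2 p.1 :=
      (Finset.sum_fiberwise_of_maps_to hmapsQ _).symm
    have hinner : ∀ Z ∈ 𝒬, ∑ p ∈ P.filter (fun p => q p = Z), yi p.2 p.1 ≤
        ∑ S' ∈ Finset.univ.filter (fun S' : Set V => S' ⊆ Zᶜ),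
          ∑ i ∈ Finset.univ.filter
            (fun i => Separates s t i Zᶜ ∧ Separates s t i S'), yi i S' := by
      intro Z _
      have hsubP : P.filter (fun p => q p = Z) ⊆
          (Finset.univ.filter (fun S' : Set V => S' ⊆ Zᶜ)) ×ˢ Finset.univ := by
        intro p hp
        obtain ⟨hpP, hqZ⟩ := Finset.mem_filter.mp hp
        obtain ⟨-, -, hsubp, -, -⟩ := hPfact p hpP
        exact Finset.mem_product.mpr ⟨Finset.mem_filter.mpr ⟨Finset.mem_univ _, hqZ ▸ hsubp⟩,
          Finset.mem_univ _⟩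
      calc ∑ p ∈ P.filter (fun p => q p = Z), yi p.2 p.1
          = ∑ p ∈ P.filter (fun p => q p = Z),
              (if Separates s t p.2 Zᶜ ∧ Separates s t p.2 p.1 then yi p.2 p.1 else 0) := by
            refine Finset.sum_congr rfl fun p hp => ?_
            obtain ⟨hpP, hqZ⟩ := Finset.mem_filter.mp hp
            obtain ⟨hsep, -, -, hsepq, -⟩ := hPfact p hpP
            rw [if_pos ⟨hqZ ▸ hsepq, hsep⟩]
        _ ≤ ∑ p ∈ (Finset.univ.filter (fun S' : Set V => S' ⊆ Zᶜ)) ×ˢ Finset.univ,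
              (if Separates s t p.2 Zᶜ ∧ Separates s t p.2 p.1 then yi p.2 p.1 else 0) := by
            refine Finset.sum_le_sum_of_subset_of_nonneg hsubP fun p _ _ => ?_
            split
            · exact hyi0 _ _
            · exact le_refl 0
        _ = ∑ S' ∈ Finset.univ.filter (fun S' : Set V => S' ⊆ Zᶜ),
              ∑ i ∈ Finset.univ.filter
                (fun i => Separates s t i Zᶜ ∧ Separates s t i S'), yi i S' := by
            rw [Finset.sum_product]
            exact Finset.sum_congr rfl fun S' _ => (Finset.sum_filter _ _).symm
    have hC2' : ∀ Z ∈ 𝒬,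
        (∑ S' ∈ Finset.univ.filter (fun S' : Set V => S' ⊆ Zᶜ),
          ∑ i ∈ Finset.univ.filter
            (fun i => Separates s t i Zᶜ ∧ Separates s t i S'), yi i S')
        ≤ (1/2) * ∑ i ∈ Finset.univ.filter (fun i => Separates s t i Zᶜ), pen i := by
      intro Z hZ
      obtain ⟨j, hjU, hZj⟩ := Finset.mem_biUnion.mp hZ
      have hjU' : ¬ Satisfies G s t X j := (Finset.mem_filter.mp hjU).2
      have hex : ∃ i, Separates s t i Zᶜ := by
        refine ⟨j, ?_⟩
        rcases Finset.mem_insert.mp hZj with hq | hq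
        · rw [hq]; exact hFs j hjU'
        · rw [Finset.mem_singleton.mp hq]; exact hFt j hjU'
      have hthis := C2 Zᶜ hex
      simp only [finsum_mem_toFinset_sum, Set.toFinset_setOf] at hthis
      exact hthis
    have hfinal : ∑ Z ∈ 𝒬,
        (1/2) * ∑ i ∈ Finset.univ.filter (fun i => Separates s t i Zᶜ), pen i
        ≤ ∑ i ∈ Finset.univ.filter (fun i => ¬ Satisfies G s t X i), pen i := by
      have hstep : ∀ Z ∈ 𝒬,
          (∑ i ∈ Finset.univ.filter (fun i => Separates s t i Zᶜ), pen i)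
          ≤ ∑ i ∈ Finset.univ, (if ¬ Satisfies G s t X i ∧
              (Z = Rcomp G X (s i) ∨ Z = Rcomp G X (t i)) then pen i else 0) := by
        intro Z hZ
        obtain ⟨j, hjU, hZj⟩ := Finset.mem_biUnion.mp hZ
        have hZw : ∃ w, Z = Rcomp G X w := by
          rcases Finset.mem_insert.mp hZj with hq | hq
          · exact ⟨s j, hq⟩
          · exact ⟨t j, Finset.mem_singleton.mp hq⟩
        obtain ⟨w, rfl⟩ := hZw
        rw [Finset.sum_filter]
        refine Finset.sum_le_sum fun i _ => ?_
        by_cases hsep : Separates s t i (Rcomp G X w)ᶜ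
        · obtain ⟨hi1, hi2⟩ := hSepCompl i w hsep
          rw [if_pos hsep, if_pos ⟨hi1, hi2⟩]
        · rw [if_neg hsep]
          split
          · exact hpen i
          · exact le_refl 0
      calc ∑ Z ∈ 𝒬,
            (1/2) * ∑ i ∈ Finset.univ.filter (fun i => Separates s t i Zᶜ), pen i
          ≤ ∑ Z ∈ 𝒬, (1/2) * ∑ i ∈ Finset.univ, (if ¬ Satisfies G s t X i ∧
              (Z = Rcomp G X (s i) ∨ Z = Rcomp G X (t i)) then pen i else 0) := by
            refine Finset.sum_le_sum fun Z hZ => ?_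
            have := hstep Z hZ
            linarith
        _ = (1/2) * ∑ i ∈ Finset.univ, ∑ Z ∈ 𝒬, (if ¬ Satisfies G s t X i ∧
              (Z = Rcomp G X (s i) ∨ Z = Rcomp G X (t i)) then pen i else 0) := by
            rw [← Finset.mul_sum, Finset.sum_comm]
        _ ≤ (1/2) * ∑ i ∈ Finset.univ,
              (if ¬ Satisfies G s t X i then 2 * pen i else 0) := by
            refine mul_le_mul_of_nonneg_left (Finset.sum_le_sum fun i _ => ?_) (by norm_num)
            by_cases hiU : ¬ Satisfies G s t X i
            · rw [if_pos hiU]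
              rw [← Finset.sum_filter]
              rw [Finset.sum_const, nsmul_eq_mul]
              have hcard : (𝒬.filter (fun Z => ¬ Satisfies G s t X i ∧
                  (Z = Rcomp G X (s i) ∨ Z = Rcomp G X (t i)))).card ≤ 2 := by
                refine le_trans (Finset.card_le_card (fun Z hZ => ?_))
                  (le_trans (Finset.card_insert_le (Rcomp G X (s i))
                    {Rcomp G X (t i)}) (by simp))
                rcases (Finset.mem_filter.mp hZ).2.2 with hq | hq
                · rw [hq]; exact Finset.mem_insert_self _ _
                · rw [hq]; exact Finset.mem_insert_of_mem (Finset.mem_singleton_self _)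
              have : ((𝒬.filter (fun Z => ¬ Satisfies G s t X i ∧
                  (Z = Rcomp G X (s i) ∨ Z = Rcomp G X (t i)))).card : ℝ) ≤ 2 := by
                exact_mod_cast hcard
              exact mul_le_mul_of_nonneg_right this (hpen i)
            · rw [if_neg hiU]
              refine le_of_eq (Finset.sum_eq_zero fun Z _ => ?_)
              rw [if_neg]
              exact fun hcon => hiU hcon.1
        _ = ∑ i ∈ Finset.univ.filter (fun i => ¬ Satisfies G s t X i), pen i := by
            rw [Finset.sum_filter, Finset.mul_sum]
            refine Finset.sum_congr rfl fun i _ => ?_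
            split <;> ring
    calc ∑ S ∈ 𝒮B, y S = ∑ p ∈ P, yi p.2 p.1 := e1.trans e2
      _ = ∑ Z ∈ 𝒬, ∑ p ∈ P.filter (fun p => q p = Z), yi p.2 p.1 := e3
      _ ≤ ∑ Z ∈ 𝒬, ∑ S' ∈ Finset.univ.filter (fun S' : Set V => S' ⊆ Zᶜ),
            ∑ i ∈ Finset.univ.filter
              (fun i => Separates s t i Zᶜ ∧ Separates s t i S'), yi i S' :=
          Finset.sum_le_sum hinner
      _ ≤ ∑ Z ∈ 𝒬,
            (1/2) * ∑ i ∈ Finset.univ.filter (fun i => Separates s t i Zᶜ), pen i :=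
          Finset.sum_le_sum hC2'
      _ ≤ ∑ i ∈ Finset.univ.filter (fun i => ¬ Satisfies G s t X i), pen i := hfinal
  exact add_le_add hA hB
end
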